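/- arXiv:2412.05614 — 8 statements merged into one kernel-verified Lean document; each statement's English description precedes it below -/
import Mathlib

section
/- Let $E$ be a real normed vector space, $\Omega \subset E$ open, $\hat{x} \in \Omega$, $r > 0$, and $(f_n)$ a sequence of real-valued functions on $\Omega$, each Lipschitz on $B(\hat{x},r) \cap \Omega$. Suppose there is a function $f_\infty$ Lipschitz on $B(\hat{x},r) \cap \Omega$ with $f_\infty(\hat{x}) = \lim_n f_n(\hat{x})$ and $\|f_n - f_\infty\|_{\hat{x},r} \to 0$, where $\|h\|_{\hat{x},r}$ denotes the Lipschitz seminorm of $h$ on $B(\hat{x},r) \cap \Omega$. Then for every $u \in E$, $D^+ f_\infty(\hat{x})(u) = \lim_{k \to \infty} D^+ f_k(\hat{x})(u)$. -/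
/-!
The difference quotients of `f n` and of `finf` at `xh` in direction `u` differ by the
difference quotient of `f n - finf`, which is at most `ε * ‖u‖` in absolute value once the
Lipschitz seminorm of `f n - finf` near `xh` is below `ε`. The quotients are bounded because
the functions are Lipschitz near `xh`, so their limsups, the Dini derivatives, also differ by
at most `ε * ‖u‖`.
-/

open Filter Topology
open scoped NNReal

/-- Upper Dini derivative of `f` at `x` in direction `u`. -/
noncomputable def dini {E : Type*} [NormedAddCommGroup E] [NormedSpace ℝ E]
    (f : E → ℝ) (x u : E) : ℝ :=
  Filter.limsup (fun t : ℝ => (f (x + t • u) - f x) / t) (𝓝[>] (0 : ℝ))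

section Limsup

variable {α : Type*} {l : Filter α} [l.NeBot] {g h : α → ℝ} {c : ℝ}

theorem limsup_le_limsup_add_of_eventually_le
    (hg : IsBoundedUnder (· ≤ ·) l fun t => |g t|)
    (hh : IsBoundedUnder (· ≤ ·) l fun t => |h t|)
    (hgh : ∀ᶠ t in l, g t ≤ h t + c) :
    limsup g l ≤ limsup h l + c := by
  rw [isBoundedUnder_le_abs] at hg hh
  calc limsup g l ≤ limsup (fun t => h t + c) l :=
        limsup_le_limsup hgh hg.2.isCoboundedUnder_le
          (isBoundedUnder_le_add hh.1 (isBoundedUnder_const (a := c)))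
    _ = limsup h l + c := limsup_add_const l h c hh.1 hh.2.isCoboundedUnder_le

theorem abs_limsup_sub_limsup_le
    (hg : IsBoundedUnder (· ≤ ·) l fun t => |g t|)
    (hh : IsBoundedUnder (· ≤ ·) l fun t => |h t|)
    (hgh : ∀ᶠ t in l, |g t - h t| ≤ c) :
    |limsup g l - limsup h l| ≤ c := by
  have hle := limsup_le_limsup_add_of_eventually_le hg hh <| hgh.mono fun t ht => by
    linarith [(abs_le.1 ht).2]
  have hge := limsup_le_limsup_add_of_eventually_le hh hg <| hgh.mono fun t ht => by
    linarith [(abs_le.1 ht).1]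
  exact abs_sub_le_iff.2 ⟨by linarith, by linarith⟩

end Limsup

theorem LipschitzOnWith.of_abs_sub_le {E : Type*} [SeminormedAddCommGroup E] {f : E → ℝ}
    {s : Set E} {K : ℝ} (hf : ∀ y ∈ s, ∀ z ∈ s, |f y - f z| ≤ K * ‖y - z‖) :
    LipschitzOnWith (Real.toNNReal K) f s :=
  .of_dist_le' fun y hy z hz => by
    simpa only [dist_eq_norm_sub, Real.norm_eq_abs] using hf y hy z hz

section Dini

variable {E : Type*} [NormedAddCommGroup E] [NormedSpace ℝ E]

theorem LipschitzOnWith.abs_slope_le {f : E → ℝ} {K : ℝ≥0} {s : Set E}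
    (hf : LipschitzOnWith K f s) {x u : E} {t : ℝ} (ht : 0 < t) (hx : x ∈ s)
    (hxt : x + t • u ∈ s) :
    |(f (x + t • u) - f x) / t| ≤ K * ‖u‖ := by
  rw [abs_div, abs_of_pos ht, div_le_iff₀ ht]
  calc |f (x + t • u) - f x| = dist (f (x + t • u)) (f x) := (Real.dist_eq _ _).symm
    _ ≤ K * dist (x + t • u) x := hf.dist_le_mul _ hxt _ hx
    _ = K * ‖u‖ * t := by
      rw [dist_eq_norm_sub, add_sub_cancel_left, norm_smul, Real.norm_of_nonneg ht.le]; ring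

theorem eventually_pos_and_add_smul_mem {s : Set E} {x : E} (hs : s ∈ 𝓝 x) (u : E) :
    ∀ᶠ t in 𝓝[>] (0 : ℝ), 0 < t ∧ x + t • u ∈ s := by
  have hline : Tendsto (fun t : ℝ => x + t • u) (𝓝 0) (𝓝 x) :=
    (continuous_const.add (continuous_id.smul continuous_const)).tendsto' 0 x (by simp)
  exact eventually_mem_nhdsWithin.and (nhdsWithin_le_nhds (hline.eventually hs))

theorem abs_dini_sub_le {f g : E → ℝ} {s : Set E} {x : E} (hs : s ∈ 𝓝 x) {K ε : ℝ≥0}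
    (hg : LipschitzOnWith K g s) (hfg : LipschitzOnWith ε (f - g) s) (u : E) :
    |dini f x u - dini g x u| ≤ ε * ‖u‖ := by
  have hf : LipschitzOnWith (ε + K) f s := by simpa using hfg.add hg
  have hx : x ∈ s := mem_of_mem_nhds hs
  have hline := eventually_pos_and_add_smul_mem hs u
  refine abs_limsup_sub_limsup_le
    (isBoundedUnder_of_eventually_le (hline.mono fun t ht => hf.abs_slope_le ht.1 hx ht.2))
    (isBoundedUnder_of_eventually_le (hline.mono fun t ht => hg.abs_slope_le ht.1 hx ht.2))
    (hline.mono fun t ht => ?_)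
  have := hfg.abs_slope_le ht.1 hx ht.2
  rwa [Pi.sub_apply, Pi.sub_apply, sub_sub_sub_comm, sub_div] at this

end Dini

theorem stmt_6_general {E : Type*} [NormedAddCommGroup E] [NormedSpace ℝ E]
    (Ω : Set E) (hΩ : IsOpen Ω) (xh : E) (hxh : xh ∈ Ω) (r : ℝ) (hr : 0 < r)
    (f : ℕ → E → ℝ) (finf : E → ℝ)
    -- `finf` is Lipschitz on `B(xh,r) ∩ Ω`
    (hlipinf : ∃ K : ℝ, ∀ y ∈ Metric.ball xh r ∩ Ω, ∀ z ∈ Metric.ball xh r ∩ Ω,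
      |finf y - finf z| ≤ K * ‖y - z‖)
    -- the Lipschitz seminorm of `f n - finf` on `B(xh,r) ∩ Ω` tends to 0
    (hsem : ∀ ε > 0, ∃ N : ℕ, ∀ n ≥ N,
      ∀ y ∈ Metric.ball xh r ∩ Ω, ∀ z ∈ Metric.ball xh r ∩ Ω,
        |(f n y - finf y) - (f n z - finf z)| ≤ ε * ‖y - z‖) :
    ∀ u : E, Tendsto (fun k => dini (f k) xh u) atTop (𝓝 (dini finf xh u)) := by
  intro u
  have hs : Metric.ball xh r ∩ Ω ∈ 𝓝 xh :=
    (Metric.isOpen_ball.inter hΩ).mem_nhds ⟨Metric.mem_ball_self hr, hxh⟩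
  obtain ⟨K, hK⟩ := hlipinf
  rw [Metric.tendsto_atTop]
  intro ε hε
  have hε' : 0 < ε / (‖u‖ + 1) := by positivity
  obtain ⟨N, hN⟩ := hsem _ hε'
  refine ⟨N, fun n hn => ?_⟩
  calc dist (dini (f n) xh u) (dini finf xh u)
      ≤ ε / (‖u‖ + 1) * ‖u‖ := by
        simpa [Real.dist_eq, hε'.le] using abs_dini_sub_le hs
          (.of_abs_sub_le hK) (.of_abs_sub_le (hN n hn)) u
    _ < ε := by
        rw [div_mul_eq_mul_div, div_lt_iff₀ (by positivity)]
        nlinarith [norm_nonneg u]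

theorem stmt_6 {E : Type*} [NormedAddCommGroup E] [NormedSpace ℝ E]
    (Ω : Set E) (hΩ : IsOpen Ω) (xh : E) (hxh : xh ∈ Ω) (r : ℝ) (hr : 0 < r)
    (f : ℕ → E → ℝ) (finf : E → ℝ)
    -- each `f n` is Lipschitz on `B(xh,r) ∩ Ω`
    (hlip : ∀ n, ∃ K : ℝ, ∀ y ∈ Metric.ball xh r ∩ Ω, ∀ z ∈ Metric.ball xh r ∩ Ω,
      |f n y - f n z| ≤ K * ‖y - z‖)
    -- `finf` is Lipschitz on `B(xh,r) ∩ Ω`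
    (hlipinf : ∃ K : ℝ, ∀ y ∈ Metric.ball xh r ∩ Ω, ∀ z ∈ Metric.ball xh r ∩ Ω,
      |finf y - finf z| ≤ K * ‖y - z‖)
    -- `finf xh = lim f n xh`
    (hval : Tendsto (fun n => f n xh) atTop (𝓝 (finf xh)))
    -- the Lipschitz seminorm of `f n - finf` on `B(xh,r) ∩ Ω` tends to 0
    (hsem : ∀ ε > 0, ∃ N : ℕ, ∀ n ≥ N,
      ∀ y ∈ Metric.ball xh r ∩ Ω, ∀ z ∈ Metric.ball xh r ∩ Ω,
        |(f n y - finf y) - (f n z - finf z)| ≤ ε * ‖y - z‖) :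
    ∀ u : E, Tendsto (fun k => dini (f k) xh u) atTop (𝓝 (dini finf xh u)) :=
  stmt_6_general Ω hΩ xh hxh r hr f finf hlipinf hsem
end

section
/- Let $E$ be a real normed vector space, $\Omega \subset E$ open, $\hat{x} \in \Omega$, $r > 0$, and $(f_n)$ a sequence of Lipschitz functions on $B(\hat{x},r)\cap\Omega$ such that each $D^+ f_n(\hat{x})$ is sublinear, and there exists $f_\infty$ Lipschitz on $B(\hat{x},r)\cap\Omega$ with $f_\infty(\hat{x}) = \lim_n f_n(\hat{x})$ and $\|f_n - f_\infty\|_{\hat{x},r} \to 0$. If each $f_n$ is Gateaux-differentiable at $\hat{x}$, then $f_\infty$ is Gateaux-differentiable at $\hat{x}$ and its Gateaux differential equals the pointwise limit of the Gateaux differentials $d_G f_n(\hat{x})$. -/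
open Filter Topology

private lemma quot_bound {a t C nu : ℝ} (ht : t ≠ 0) (h : |a| ≤ C * (|t| * nu)) :
    |a / t| ≤ C * nu := by
  have h' : C * nu * |t| = C * (|t| * nu) := by ring
  rw [abs_div, div_le_iff₀ (abs_pos.mpr ht), h']
  exact h

theorem stmt_7 {E : Type*} [NormedAddCommGroup E] [NormedSpace ℝ E]
    (Ω : Set E) (hΩ : IsOpen Ω) (xh : E) (hxh : xh ∈ Ω) (r : ℝ) (hr : 0 < r)
    (f : ℕ → E → ℝ) (finf : E → ℝ)
    (hlip : ∀ n, ∃ K : ℝ, ∀ y ∈ Metric.ball xh r ∩ Ω, ∀ z ∈ Metric.ball xh r ∩ Ω,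
      |f n y - f n z| ≤ K * ‖y - z‖)
    (hsub : ∀ n, (∀ u v : E, dini (f n) xh (u + v) ≤ dini (f n) xh u + dini (f n) xh v) ∧
      (∀ u : E, ∀ c : ℝ, 0 ≤ c → dini (f n) xh (c • u) = c * dini (f n) xh u))
    (hlipinf : ∃ K : ℝ, ∀ y ∈ Metric.ball xh r ∩ Ω, ∀ z ∈ Metric.ball xh r ∩ Ω,
      |finf y - finf z| ≤ K * ‖y - z‖)
    (hval : Tendsto (fun n => f n xh) atTop (𝓝 (finf xh)))
    (hsem : ∀ ε > 0, ∃ N : ℕ, ∀ n ≥ N,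
      ∀ y ∈ Metric.ball xh r ∩ Ω, ∀ z ∈ Metric.ball xh r ∩ Ω,
        |(f n y - finf y) - (f n z - finf z)| ≤ ε * ‖y - z‖)
    -- each `f n` is Gateaux-differentiable at `xh` with differential `L n`
    (L : ℕ → E →L[ℝ] ℝ)
    (hG : ∀ n, ∀ u : E,
      Tendsto (fun t : ℝ => (f n (xh + t • u) - f n xh) / t) (𝓝[≠] (0 : ℝ)) (𝓝 (L n u))) :
    ∃ ℓ : E →L[ℝ] ℝ,
      (∀ u : E, Tendsto (fun t : ℝ => (finf (xh + t • u) - finf xh) / t)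
        (𝓝[≠] (0 : ℝ)) (𝓝 (ℓ u))) ∧
      (∀ u : E, Tendsto (fun n => L n u) atTop (𝓝 (ℓ u))) := by
  classical
  -- basic membership facts
  obtain ⟨δ, hδ, hδΩ⟩ := Metric.isOpen_iff.mp hΩ xh hxh
  set ρ := min r δ with hρdef
  have hρ : 0 < ρ := lt_min hr hδ
  have hxmem : xh ∈ Metric.ball xh r ∩ Ω := ⟨Metric.mem_ball_self hr, hxh⟩
  have hmem : ∀ (t : ℝ) (u : E), |t| * ‖u‖ < ρ → xh + t • u ∈ Metric.ball xh r ∩ Ω := by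
    intro t u h
    have hd : dist (xh + t • u) xh = |t| * ‖u‖ := by
      rw [dist_eq_norm, add_sub_cancel_left, norm_smul, Real.norm_eq_abs]
    constructor
    · rw [Metric.mem_ball, hd]; exact h.trans_le (min_le_left _ _)
    · exact hδΩ (by rw [Metric.mem_ball, hd]; exact h.trans_le (min_le_right _ _))
  have hev : ∀ u : E, ∀ᶠ t in 𝓝[≠] (0 : ℝ),
      t ≠ 0 ∧ xh + t • u ∈ Metric.ball xh r ∩ Ω := by
    intro u
    have h1 : ∀ᶠ t in 𝓝 (0 : ℝ), |t| < ρ / (‖u‖ + 1) := by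
      have := eventually_abs_sub_lt (0 : ℝ) (div_pos hρ (by positivity : (0:ℝ) < ‖u‖ + 1))
      simpa using this
    filter_upwards [eventually_nhdsWithin_of_eventually_nhds h1,
      self_mem_nhdsWithin] with t ht ht0
    refine ⟨ht0, hmem t u ?_⟩
    have h2 : |t| * ‖u‖ ≤ |t| * (‖u‖ + 1) := by nlinarith [abs_nonneg t, norm_nonneg u]
    have h3 : |t| * (‖u‖ + 1) < ρ := by
      rw [← lt_div_iff₀ (by positivity)] at *
      exact ht
    linarith
  -- Step 1: (L n u) is Cauchy in n, for each u
  have hcau : ∀ u : E, ∃ l : ℝ, Tendsto (fun n => L n u) atTop (𝓝 l) := by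
    intro u
    refine cauchySeq_tendsto_of_complete ?_
    rw [Metric.cauchySeq_iff]
    intro ε hε
    obtain ⟨N, hN⟩ := hsem (ε / (2 * (‖u‖ + 1))) (by positivity)
    refine ⟨N, fun m hm n hn => ?_⟩
    have hb : |(L m u : ℝ) - L n u| ≤ 2 * (ε / (2 * (‖u‖ + 1))) * ‖u‖ := by
      have htend : Tendsto (fun t : ℝ =>
          |((f m (xh + t • u) - f m xh) / t - (f n (xh + t • u) - f n xh) / t)|)
          (𝓝[≠] (0 : ℝ)) (𝓝 |(L m u : ℝ) - L n u|) := ((hG m u).sub (hG n u)).abs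
      refine le_of_tendsto htend ?_
      filter_upwards [hev u] with t ⟨ht0, htm⟩
      set ε' := ε / (2 * (‖u‖ + 1))
      have h1 := hN m hm _ htm _ hxmem
      have h2 := hN n hn _ htm _ hxmem
      rw [add_sub_cancel_left, norm_smul, Real.norm_eq_abs] at h1 h2
      rw [div_sub_div_same]
      refine quot_bound ht0 ?_
      have : |f m (xh + t • u) - f m xh - (f n (xh + t • u) - f n xh)| ≤
          ε' * (|t| * ‖u‖) + ε' * (|t| * ‖u‖) := by
        have := abs_sub (f m (xh + t • u) - finf (xh + t • u) - (f m xh - finf xh))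
          (f n (xh + t • u) - finf (xh + t • u) - (f n xh - finf xh))
        calc |f m (xh + t • u) - f m xh - (f n (xh + t • u) - f n xh)|
            = |(f m (xh + t • u) - finf (xh + t • u) - (f m xh - finf xh)) -
              (f n (xh + t • u) - finf (xh + t • u) - (f n xh - finf xh))| := by ring_nf
          _ ≤ _ := (abs_sub _ _).trans (add_le_add h1 h2)
      calc |f m (xh + t • u) - f m xh - (f n (xh + t • u) - f n xh)|
          ≤ ε' * (|t| * ‖u‖) + ε' * (|t| * ‖u‖) := this
        _ = 2 * ε' * (|t| * ‖u‖) := by ring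
    have : 2 * (ε / (2 * (‖u‖ + 1))) * ‖u‖ < ε := by
      have hu1 : ‖u‖ / (‖u‖ + 1) < 1 :=
        (div_lt_one (by positivity)).mpr (by linarith [norm_nonneg u])
      have heq : 2 * (ε / (2 * (‖u‖ + 1))) * ‖u‖ = ε * (‖u‖ / (‖u‖ + 1)) := by
        field_simp
      rw [heq]; nlinarith
    rw [Real.dist_eq]
    linarith [hb]
  choose g hg using hcau
  -- Step 2: difference quotients of finf tend to g u
  have hqt : ∀ u : E, Tendsto (fun t : ℝ => (finf (xh + t • u) - finf xh) / t)
      (𝓝[≠] (0 : ℝ)) (𝓝 (g u)) := by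
    intro u
    rw [Metric.tendsto_nhds]
    intro ε hε
    set ε' := ε / (3 * (‖u‖ + 1)) with hε'def
    have hε'pos : 0 < ε' := by positivity
    obtain ⟨N, hN⟩ := hsem ε' hε'pos
    have hcl : ∀ᶠ n in atTop, |(L n u : ℝ) - g u| < ε / 3 :=
      (hg u).eventually (eventually_abs_sub_lt (g u) (by linarith : (0:ℝ) < ε/3))
    obtain ⟨n, hnN, hn⟩ := ((eventually_ge_atTop N).and hcl).exists
    filter_upwards [hev u, (hG n u).eventually
      (eventually_abs_sub_lt (L n u) (by linarith : (0:ℝ) < ε/3))] with t ⟨ht0, htm⟩ htq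
    rw [Real.dist_eq]
    have h1 := hN n hnN _ htm _ hxmem
    rw [add_sub_cancel_left, norm_smul, Real.norm_eq_abs] at h1
    have h2 : |(f n (xh + t • u) - f n xh) / t - (finf (xh + t • u) - finf xh) / t|
        ≤ ε' * ‖u‖ := by
      rw [div_sub_div_same]
      refine quot_bound ht0 ?_
      calc |f n (xh + t • u) - f n xh - (finf (xh + t • u) - finf xh)|
          = |(f n (xh + t • u) - finf (xh + t • u)) - (f n xh - finf xh)| := by ring_nf
        _ ≤ ε' * (|t| * ‖u‖) := h1
    have h3 : ε' * ‖u‖ < ε / 3 := by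
      rw [hε'def, div_mul_eq_mul_div, div_lt_iff₀ (by positivity)]
      nlinarith [norm_nonneg u]
    have habs : |(finf (xh + t • u) - finf xh) / t - g u| ≤
        |(finf (xh + t • u) - finf xh) / t - (f n (xh + t • u) - f n xh) / t| +
        |(f n (xh + t • u) - f n xh) / t - L n u| + |(L n u : ℝ) - g u| := by
      calc |(finf (xh + t • u) - finf xh) / t - g u|
          ≤ |(finf (xh + t • u) - finf xh) / t - (f n (xh + t • u) - f n xh) / t| +
            |(f n (xh + t • u) - f n xh) / t - g u| := abs_sub_le _ _ _
        _ ≤ _ := by linarith [abs_sub_le ((f n (xh + t • u) - f n xh) / t) (L n u : ℝ) (g u)]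
    rw [abs_sub_comm] at h2
    calc |(finf (xh + t • u) - finf xh) / t - g u| ≤ _ := habs
      _ < ε / 3 + ε / 3 + ε / 3 := by linarith [htq]
      _ = ε := by ring
  -- linearity of g
  have hadd : ∀ u v : E, g (u + v) = g u + g v := by
    intro u v
    refine tendsto_nhds_unique ?_ ((hg u).add (hg v))
    have : (fun n => (L n u : ℝ) + L n v) = fun n => L n (u + v) := by
      funext n; rw [map_add]
    rw [this]; exact hg (u + v)
  have hsmul : ∀ (c : ℝ) (u : E), g (c • u) = c * g u := by
    intro c u
    refine tendsto_nhds_unique ?_ ((hg u).const_mul c)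
    have : (fun n => c * (L n u : ℝ)) = fun n => L n (c • u) := by
      funext n; rw [map_smul]; rfl
    rw [this]; exact hg (c • u)
  -- bound on g
  obtain ⟨K, hK⟩ := hlipinf
  set K' := max K 0 with hK'def
  have hgb : ∀ u : E, |g u| ≤ K' * ‖u‖ := by
    intro u
    refine le_of_tendsto (hqt u).abs ?_
    filter_upwards [hev u] with t ⟨ht0, htm⟩
    refine quot_bound ht0 ?_
    have h1 := hK _ htm _ hxmem
    rw [add_sub_cancel_left, norm_smul, Real.norm_eq_abs] at h1
    refine h1.trans ?_
    have : 0 ≤ |t| * ‖u‖ := by positivity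
    nlinarith [le_max_left K 0]
  -- assemble the continuous linear map
  refine ⟨LinearMap.mkContinuous
    { toFun := g
      map_add' := hadd
      map_smul' := hsmul } K' (fun u => by simpa [Real.norm_eq_abs] using hgb u), ?_, ?_⟩
  · intro u; exact hqt u
  · intro u; exact hg u
end

section
/- Let $E$ be a real normed vector space, $\Omega \subset E$ open, $\hat{x} \in \Omega$, $r > 0$, and $(f_n)_{n \in \mathbb{N}}$ a sequence of Lipschitz functions on $B(\hat{x},r)\cap\Omega$ satisfying: each $D^+ f_n(\hat{x})$ is sublinear, and there is $f_\infty$ Lipschitz on $B(\hat{x},r)\cap\Omega$ with $f_\infty(\hat{x}) = \lim_n f_n(\hat{x})$ and $\|f_n - f_\infty\|_{\hat{x},r} \to 0$. Then for every $u \in E$: $\limsup_{t \to 0^+} \sup_{k \in \mathbb{N}} \frac{f_k(\hat{x}+tu) - f_k(\hat{x})}{t} = \sup_{k \in \mathbb{N}} D^+ f_k(\hat{x})(u)$. -/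
open Filter Topology

theorem stmt_8 {E : Type*} [NormedAddCommGroup E] [NormedSpace ℝ E]
    (Ω : Set E) (hΩ : IsOpen Ω) (xh : E) (hxh : xh ∈ Ω) (r : ℝ) (hr : 0 < r)
    (f : ℕ → E → ℝ) (finf : E → ℝ)
    (hlip : ∀ n, ∃ K : ℝ, ∀ y ∈ Metric.ball xh r ∩ Ω, ∀ z ∈ Metric.ball xh r ∩ Ω,
      |f n y - f n z| ≤ K * ‖y - z‖)
    (hsub : ∀ n, (∀ u v : E, dini (f n) xh (u + v) ≤ dini (f n) xh u + dini (f n) xh v) ∧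
      (∀ u : E, ∀ c : ℝ, 0 ≤ c → dini (f n) xh (c • u) = c * dini (f n) xh u))
    (hlipinf : ∃ K : ℝ, ∀ y ∈ Metric.ball xh r ∩ Ω, ∀ z ∈ Metric.ball xh r ∩ Ω,
      |finf y - finf z| ≤ K * ‖y - z‖)
    (hval : Tendsto (fun n => f n xh) atTop (𝓝 (finf xh)))
    (hsem : ∀ ε > 0, ∃ N : ℕ, ∀ n ≥ N,
      ∀ y ∈ Metric.ball xh r ∩ Ω, ∀ z ∈ Metric.ball xh r ∩ Ω,
        |(f n y - finf y) - (f n z - finf z)| ≤ ε * ‖y - z‖) :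
    ∀ u : E,
      Filter.limsup (fun t : ℝ => ⨆ k : ℕ, (f k (xh + t • u) - f k xh) / t) (𝓝[>] (0 : ℝ)) =
        ⨆ k : ℕ, dini (f k) xh u := by
  intro u
  set B := Metric.ball xh r ∩ Ω with hB
  have hx0 : xh ∈ B := ⟨Metric.mem_ball_self hr, hxh⟩
  let g : ℕ → ℝ → ℝ := fun k t => (f k (xh + t • u) - f k xh) / t
  let gI : ℝ → ℝ := fun t => (finf (xh + t • u) - finf xh) / t
  let S : ℝ → ℝ := fun t => ⨆ k : ℕ, g k t
  have hSeq : (fun t : ℝ => ⨆ k : ℕ, (f k (xh + t • u) - f k xh) / t) = S := rfl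
  have hdini : ∀ k, dini (f k) xh u = Filter.limsup (g k) (𝓝[>] (0 : ℝ)) := fun k => rfl
  rw [hSeq]
  have h0u : (0:ℝ) ≤ ‖u‖ := norm_nonneg u
  -- membership of the curve in B for small t
  have hmem : ∀ᶠ t in 𝓝[>] (0 : ℝ), xh + t • u ∈ B := by
    have hc : Continuous fun t : ℝ => xh + t • u := by continuity
    have hBopen : IsOpen B := (Metric.isOpen_ball).inter hΩ
    have h0 : (fun t : ℝ => xh + t • u) 0 ∈ B := by simpa using hx0
    have := hc.continuousAt (x := (0:ℝ)) (hBopen.mem_nhds h0)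
    exact nhdsWithin_le_nhds this
  have hpos : ∀ᶠ t in 𝓝[>] (0 : ℝ), 0 < t := self_mem_nhdsWithin
  -- generic quotient estimate
  have quot : ∀ (F : E → ℝ) (C : ℝ),
      (∀ y ∈ B, ∀ z ∈ B, |F y - F z| ≤ C * ‖y - z‖) →
      ∀ t : ℝ, 0 < t → xh + t • u ∈ B → |(F (xh + t • u) - F xh) / t| ≤ C * ‖u‖ := by
    intro F C hF t ht hm
    have h1 := hF _ hm _ hx0
    have hnorm : ‖xh + t • u - xh‖ = t * ‖u‖ := by
      simp [norm_smul, abs_of_pos ht]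
    rw [hnorm] at h1
    rw [abs_div, abs_of_pos ht, div_le_iff₀ ht]
    calc |F (xh + t • u) - F xh| ≤ C * (t * ‖u‖) := h1
      _ = C * ‖u‖ * t := by ring
  -- choose Lipschitz constants
  choose K hK using hlip
  obtain ⟨KI, hKI⟩ := hlipinf
  have hgb : ∀ k, ∀ t : ℝ, 0 < t → xh + t • u ∈ B → |g k t| ≤ K k * ‖u‖ :=
    fun k t ht hm => quot (f k) (K k) (hK k) t ht hm
  have hgIb : ∀ t : ℝ, 0 < t → xh + t • u ∈ B → |gI t| ≤ KI * ‖u‖ :=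
    fun t ht hm => quot finf KI hKI t ht hm
  -- difference estimate from hsem
  have hdgen : ∀ (ε : ℝ) (N : ℕ),
      (∀ n ≥ N, ∀ y ∈ B, ∀ z ∈ B, |(f n y - finf y) - (f n z - finf z)| ≤ ε * ‖y - z‖) →
      ∀ n, N ≤ n → ∀ t : ℝ, 0 < t → xh + t • u ∈ B → |g n t - gI t| ≤ ε * ‖u‖ := by
    intro ε N hN n hn t ht hm
    have h1 := quot (fun y => f n y - finf y) ε (fun y hy z hz => hN n hn y hy z hz) t ht hm
    have heq : (f n (xh + t • u) - finf (xh + t • u) - (f n xh - finf xh)) / t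
        = g n t - gI t := by
      show _ = (f n (xh + t • u) - f n xh) / t - (finf (xh + t • u) - finf xh) / t
      ring
    rwa [heq] at h1
  obtain ⟨N₁, hN₁⟩ := hsem 1 one_pos
  have hd1 := hdgen 1 N₁ hN₁
  -- a uniform bound
  set Bnd : ℝ := max ((KI + 1) * ‖u‖)
      ((Finset.range (N₁ + 1)).sup' (by simp) fun j => |K j| * ‖u‖) with hBnd
  have hall : ∀ᶠ t in 𝓝[>] (0:ℝ),
      BddAbove (Set.range fun k => g k t) ∧ S t ≤ Bnd ∧ -Bnd ≤ S t := by
    filter_upwards [hmem, hpos] with t hm ht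
    have hub : ∀ k, g k t ≤ Bnd := by
      intro k
      rcases le_or_gt k N₁ with hk | hk
      · have h1 := hgb k t ht hm
        have h2 : K k * ‖u‖ ≤ |K k| * ‖u‖ :=
          mul_le_mul_of_nonneg_right (le_abs_self _) h0u
        have h3 : |K k| * ‖u‖ ≤ (Finset.range (N₁ + 1)).sup' (by simp) fun j => |K j| * ‖u‖ :=
          Finset.le_sup' (fun j => |K j| * ‖u‖) (Finset.mem_range.2 (Nat.lt_succ_of_le hk))
        have := (abs_le.1 h1).2
        calc g k t ≤ K k * ‖u‖ := this
          _ ≤ _ := h2.trans (h3.trans (le_max_right _ _))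
      · have h1 := hd1 k hk.le t ht hm
        have h2 := hgIb t ht hm
        have := (abs_le.1 h1).2
        have h3 := (abs_le.1 h2).2
        have : g k t ≤ (KI + 1) * ‖u‖ := by linarith [this, h3]
        exact this.trans (le_max_left _ _)
    have hbdd : BddAbove (Set.range fun k => g k t) := by
      refine ⟨Bnd, ?_⟩
      rintro x ⟨k, rfl⟩
      exact hub k
    have hlb : -Bnd ≤ S t := by
      have h1 := hgb 0 t ht hm
      have h2 : |K 0| * ‖u‖ ≤ Bnd := le_trans
        (Finset.le_sup' (fun j => |K j| * ‖u‖) (Finset.mem_range.2 (Nat.succ_pos N₁)))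
        (le_max_right _ _)
      have h3 : -Bnd ≤ g 0 t := by
        have := (abs_le.1 h1).1
        have h4 : K 0 * ‖u‖ ≤ |K 0| * ‖u‖ := mul_le_mul_of_nonneg_right (le_abs_self _) h0u
        linarith
      exact h3.trans (le_ciSup hbdd 0)
    exact ⟨hbdd, ciSup_le hub, hlb⟩
  have hbS : IsBoundedUnder (· ≤ ·) (𝓝[>] (0:ℝ)) S :=
    ⟨Bnd, eventually_map.2 (hall.mono fun t h => h.2.1)⟩
  have hcoS : IsCoboundedUnder (· ≤ ·) (𝓝[>] (0:ℝ)) S :=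
    isCoboundedUnder_le_of_eventually_le _ (hall.mono fun t h => h.2.2)
  have hbg : ∀ k, IsBoundedUnder (· ≤ ·) (𝓝[>] (0:ℝ)) (g k) := by
    intro k
    refine ⟨K k * ‖u‖, eventually_map.2 ?_⟩
    filter_upwards [hmem, hpos] with t hm ht
    exact (abs_le.1 (hgb k t ht hm)).2
  have hcog : ∀ k, IsCoboundedUnder (· ≤ ·) (𝓝[>] (0:ℝ)) (g k) := by
    intro k
    refine isCoboundedUnder_le_of_eventually_le _ (x := -(K k * ‖u‖)) ?_
    filter_upwards [hmem, hpos] with t hm ht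
    exact (abs_le.1 (hgb k t ht hm)).1
  -- first direction
  have h1 : ∀ k, dini (f k) xh u ≤ Filter.limsup S (𝓝[>] (0:ℝ)) := by
    intro k
    rw [hdini k]
    refine limsup_le_limsup ?_ (hcog k) hbS
    filter_upwards [hall] with t h
    exact le_ciSup h.1 k
  refine le_antisymm ?_ (ciSup_le h1)
  -- second direction
  have hDbdd : BddAbove (Set.range fun k => dini (f k) xh u) := by
    refine ⟨Filter.limsup S (𝓝[>] (0:ℝ)), ?_⟩
    rintro x ⟨k, rfl⟩
    exact h1 k
  set D : ℝ := ⨆ k, dini (f k) xh u with hD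
  refine le_of_forall_pos_le_add ?_
  intro δ hδ
  have hεpos : 0 < δ / (4 * (‖u‖ + 1)) := by positivity
  set ε : ℝ := δ / (4 * (‖u‖ + 1)) with hε
  obtain ⟨N, hN⟩ := hsem ε hεpos
  have hdε := hdgen ε N hN
  have hεu : 0 ≤ ε * ‖u‖ := by positivity
  have hevk : ∀ᶠ t in 𝓝[>] (0:ℝ), ∀ j ∈ Finset.range (N + 1), g j t < D + δ/2 := by
    refine (Finset.range (N + 1)).eventually_all.2 fun j _ => ?_
    have hj : dini (f j) xh u ≤ D := le_ciSup hDbdd j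
    have : Filter.limsup (g j) (𝓝[>] (0:ℝ)) < D + δ/2 := by
      rw [← hdini j]; linarith
    exact eventually_lt_of_limsup_lt this (hbg j)
  have hev : ∀ᶠ t in 𝓝[>] (0:ℝ), S t ≤ D + δ/2 + 2 * (ε * ‖u‖) := by
    filter_upwards [hmem, hpos, hevk] with t hm ht hk
    refine ciSup_le fun k => ?_
    rcases le_or_gt k N with hkN | hkN
    · have := hk k (Finset.mem_range.2 (Nat.lt_succ_of_le hkN))
      linarith
    · have ha := abs_le.1 (hdε k hkN.le t ht hm)
      have hb := abs_le.1 (hdε N le_rfl t ht hm)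
      have hNlt := hk N (Finset.mem_range.2 (Nat.lt_succ_self N))
      linarith [ha.2, hb.1]
  have hls : Filter.limsup S (𝓝[>] (0:ℝ)) ≤ D + δ/2 + 2 * (ε * ‖u‖) :=
    limsup_le_of_le hcoS hev
  have hfin : 2 * (ε * ‖u‖) ≤ δ/2 := by
    have hden : (0:ℝ) < 4 * (‖u‖ + 1) := by positivity
    have hc : ε * (4 * (‖u‖ + 1)) = δ := by
      rw [hε]; field_simp
    nlinarith [hεu, hδ.le, h0u]
  linarith
end

section
/- Let $X$ be a real vector space, $C \subset X$ nonempty convex, and $h_n : C \to \mathbb{R}$, $n \in \mathbb{N}$, a sequence of convex functions converging pointwise to a function $h_\infty$. Then there exists a sequence of nonnegative reals $(\alpha_\infty, \alpha_0, \alpha_1, \ldots) \in \ell^1$ with $\alpha_\infty + \sum_{n \geq 0} \alpha_n = 1$ such that $\inf_{u \in C} \big( \alpha_\infty h_\infty(u) + \sum_{n \geq 0} \alpha_n h_n(u) \big) = \inf_{u \in C} \sup_{n \in \mathbb{N}} h_n(u)$. -/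
/-!
Send `u ∈ C` to the convergent sequence `F u = (h₀ u, h₁ u, … ; h∞ u)`, an element of
`C(ℕ ∪ {∞}, ℝ)`. Then `F` is convex for the pointwise order, and `sup_n hₙ u` is the maximum of
`F u`. If `r` is the infimum over `C` of these maxima, the open convex set `{y | y < r}` misses
the convex upward closure of `F '' C`, and Hahn–Banach separates them by a functional which,
being bounded below on an upward-closed set, is positive. Normalised, it is a state `ψ` with
`r ≤ ψ (F u)` on `C`; conversely every state satisfies `ψ y ≤ max y`. Finally every state on
`C(ℕ ∪ {∞}, ℝ)` is `y ↦ α∞ y ∞ + ∑ αₙ y n`, by expanding `y` along the unit sequences.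
-/

open Filter Topology

theorem convexOn_of_tendsto {E : Type*} [AddCommGroup E] [Module ℝ E] {s : Set E}
    {ι : Type*} {l : Filter ι} [l.NeBot] {f : ι → E → ℝ} {g : E → ℝ}
    (hf : ∀ᶠ i in l, ConvexOn ℝ s (f i)) (hlim : ∀ x ∈ s, Tendsto (fun i => f i x) l (𝓝 (g x))) :
    ConvexOn ℝ s g := by
  obtain ⟨i, hi⟩ := hf.exists
  refine ⟨hi.1, fun x hx y hy a b ha hb hab => ?_⟩
  exact le_of_tendsto_of_tendsto (hlim _ (hi.1 hx hy ha hb hab))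
    (((hlim x hx).const_mul a).add ((hlim y hy).const_mul b))
    (hf.mono fun j hj => hj.2 hx hy ha hb hab)

theorem ContinuousMap.convexOn_of_forall_apply {E : Type*} [AddCommGroup E] [Module ℝ E]
    {s : Set E} {K : Type*} [TopologicalSpace K] {F : E → C(K, ℝ)} (hs : Convex ℝ s)
    (hF : ∀ k, ConvexOn ℝ s fun u => F u k) : ConvexOn ℝ s F :=
  ⟨hs, fun _ hx _ hy _ _ ha hb hab k => (hF k).2 hx hy ha hb hab⟩

def IsState {K : Type*} [TopologicalSpace K] (φ : C(K, ℝ) →L[ℝ] ℝ) : Prop :=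
  (∀ x, 0 ≤ x → 0 ≤ φ x) ∧ φ 1 = 1

namespace IsState

variable {K : Type*} [TopologicalSpace K] {φ : C(K, ℝ) →L[ℝ] ℝ}

lemma apply_le_of_forall_le (hφ : IsState φ) {x : C(K, ℝ)} {c : ℝ} (hx : ∀ k, x k ≤ c) :
    φ x ≤ c := by
  have := hφ.1 (c • 1 - x) (sub_nonneg.mpr fun k => by simpa using hx k)
  rwa [map_sub, map_smul, hφ.2, smul_eq_mul, mul_one, sub_nonneg] at this

lemma coe_apply_le_iSup (hφ : IsState φ) (x : C(K, ℝ)) :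
    (φ x : EReal) ≤ ⨆ k, (x k : EReal) :=
  EReal.le_of_forall_lt_iff_le.mp fun _ hz => EReal.coe_le_coe_iff.mpr <|
    hφ.apply_le_of_forall_le fun k => EReal.coe_le_coe_iff.mp ((le_iSup _ k).trans hz.le)

lemma evalCLM (k : K) : IsState (ContinuousMap.evalCLM ℝ k : C(K, ℝ) →L[ℝ] ℝ) :=
  ⟨fun _ hx => hx k, rfl⟩

end IsState

lemma nonneg_of_le_apply_add_smul {E : Type*} [AddCommGroup E] [Module ℝ E] (φ : E →ₗ[ℝ] ℝ)
    {a x : E} {c : ℝ} (h : ∀ t : ℝ, 0 ≤ t → c ≤ φ (a + t • x)) : 0 ≤ φ x := by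
  by_contra! hx
  have ha : c ≤ φ a := by simpa using h 0 le_rfl
  have ht := h ((φ a - c + 1) / -φ x) (div_nonneg (by linarith) (by linarith))
  rw [map_add, map_smul, smul_eq_mul, div_mul_eq_mul_div, div_neg, mul_div_assoc,
    div_self hx.ne] at ht
  linarith

section Separation

variable {K : Type*} [TopologicalSpace K] [CompactSpace K]

lemma exists_isState_of_lt_of_le (φ : C(K, ℝ) →L[ℝ] ℝ) {c r : ℝ}
    (hpos : ∀ x, 0 ≤ x → 0 ≤ φ x) (hlt : ∀ s < r, φ (s • 1) < c) {a : C(K, ℝ)}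
    (ha : c ≤ φ a) : ∃ ψ, IsState ψ ∧ ∀ y, c ≤ φ y → r ≤ ψ y := by
  have hφ1 : 0 < φ 1 := by
    have hbound := hpos (‖a‖ • 1 - a) (sub_nonneg.mpr fun k => by simpa using a.apply_le_norm k)
    rw [map_sub, map_smul, smul_eq_mul, sub_nonneg] at hbound
    have hc := hlt (r - 1) (by linarith)
    rw [map_smul, smul_eq_mul] at hc
    rcases (hpos 1 zero_le_one).lt_or_eq with h | h
    · exact h
    · rw [← h] at hbound hc
      linarith
  have hr : r * φ 1 ≤ c := by
    by_contra! h
    have := hlt (c / φ 1) ((div_lt_iff₀ hφ1).mpr h)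
    rw [map_smul, smul_eq_mul, div_mul_cancel₀ _ hφ1.ne'] at this
    exact this.false
  refine ⟨(φ 1)⁻¹ • φ, ⟨fun x hx => ?_, ?_⟩, fun y hy => ?_⟩
  · exact mul_nonneg (inv_nonneg.mpr hφ1.le) (hpos x hx)
  · exact inv_mul_cancel₀ hφ1.ne'
  · rw [smul_apply, smul_eq_mul, le_inv_mul_iff₀ hφ1, mul_comm]
    exact hr.trans hy

variable [Nonempty K] {X : Type*} [AddCommGroup X] [Module ℝ X]

theorem exists_isState_le_of_convexOn {C : Set X} (hC : C.Nonempty) {F : X → C(K, ℝ)}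
    (hF : ConvexOn ℝ C F) {r : ℝ} (hr : ∀ u ∈ C, (r : EReal) ≤ ⨆ k, (F u k : EReal)) :
    ∃ ψ, IsState ψ ∧ ∀ u ∈ C, r ≤ ψ (F u) := by
  set A : Set C(K, ℝ) := {y | ∃ u ∈ C, F u ≤ y}
  set B : Set C(K, ℝ) := {y | ∀ k, y k < r}
  have hAconv : Convex ℝ A := by
    have : A = LinearMap.snd ℝ X C(K, ℝ) '' {p | p.1 ∈ C ∧ F p.1 ≤ p.2} := by
      ext; simp [A]
    exact this ▸ hF.convex_epigraph.linear_image _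
  have hBopen : IsOpen B := by
    simpa [B, Set.MapsTo] using
      ContinuousMap.isOpen_setOfPred_mapsTo (Y := ℝ) isCompact_univ (isOpen_Iio (a := r))
  have hBconv : Convex ℝ B := fun y hy z hz a b ha hb hab k => by
    simpa using convex_Iio r (hy k) (hz k) ha hb hab
  have hdisj : Disjoint B A := by
    refine Set.disjoint_left.mpr fun y hyB ⟨u, hu, hFy⟩ => ?_
    obtain ⟨k₀, hk₀⟩ := y.continuous.exists_forall_ge (by simp)
    have : ⨆ k, (F u k : EReal) < r := lt_of_le_of_lt
      (iSup_le fun k => EReal.coe_le_coe_iff.mpr ((hFy k).trans (hk₀ k)))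
      (EReal.coe_lt_coe_iff.mpr (hyB k₀))
    exact (hr u hu).not_gt this
  obtain ⟨φ, c, hφB, hφA⟩ := geometric_hahn_banach_open hBconv hBopen hAconv hdisj
  obtain ⟨u₀, hu₀⟩ := hC
  have hpos : ∀ x, 0 ≤ x → 0 ≤ φ x := fun x hx =>
    nonneg_of_le_apply_add_smul φ.toLinearMap fun t ht =>
      hφA _ ⟨u₀, hu₀, le_add_of_nonneg_right (smul_nonneg ht hx)⟩
  obtain ⟨ψ, hψ, hψr⟩ := exists_isState_of_lt_of_le φ hpos
    (fun s hs => hφB _ fun k => by simpa using hs) (hφA _ ⟨u₀, hu₀, le_rfl⟩)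
  exact ⟨ψ, hψ, fun u hu => hψr _ (hφA _ ⟨u, hu, le_rfl⟩)⟩

end Separation

theorem exists_isState_iInf_eq_iInf_iSup {K : Type*} [TopologicalSpace K] [CompactSpace K]
    [Nonempty K] {X : Type*} [AddCommGroup X] [Module ℝ X] {C : Set X} (hC : C.Nonempty)
    {F : X → C(K, ℝ)} (hF : ConvexOn ℝ C F) :
    ∃ ψ, IsState ψ ∧ ⨅ u : C, (ψ (F u) : EReal) = ⨅ u : C, ⨆ k, (F u k : EReal) := by
  set m := ⨅ u : C, ⨆ k, (F u k : EReal)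
  suffices ∃ ψ, IsState ψ ∧ ∀ u ∈ C, m ≤ ψ (F u) by
    obtain ⟨ψ, hψ, hm⟩ := this
    exact ⟨ψ, hψ, le_antisymm (iInf_mono fun u => hψ.coe_apply_le_iSup _)
      (le_iInf fun u => hm u u.2)⟩
  obtain ⟨u₀, hu₀⟩ := hC
  have htop : m ≠ ⊤ := ne_top_of_le_ne_top (EReal.coe_ne_top ‖F u₀‖) <|
    (iInf_le _ ⟨u₀, hu₀⟩).trans <|
      iSup_le fun k => EReal.coe_le_coe_iff.mpr ((F u₀).apply_le_norm k)
  by_cases hbot : m = ⊥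
  · exact ⟨_, IsState.evalCLM (Classical.arbitrary K), fun u _ => hbot ▸ bot_le⟩
  have hm : (m.toReal : EReal) = m := EReal.coe_toReal htop hbot
  obtain ⟨ψ, hψ, hr⟩ := exists_isState_le_of_convexOn ⟨u₀, hu₀⟩ hF (r := m.toReal)
    fun u hu => hm.trans_le (iInf_le _ (⟨u, hu⟩ : C))
  exact ⟨ψ, hψ, fun u hu => hm.symm.trans_le (EReal.coe_le_coe_iff.mpr (hr u hu))⟩

open OnePoint

namespace OnePoint

theorem iSup_coe_eq_iSup_of_continuous {Y : Type*} [CompleteLinearOrder Y] [TopologicalSpace Y]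
    [OrderTopology Y] {f : OnePoint ℕ → Y} (hf : Continuous f) : ⨆ n : ℕ, f n = ⨆ k, f k := by
  refine le_antisymm (iSup_le fun n => le_iSup f n) (iSup_le fun k => ?_)
  induction k using OnePoint.rec with
  | infty =>
    exact le_of_tendsto' ((continuous_iff_from_nat f).mp hf) fun n => le_iSup (fun n : ℕ => f n) n
  | coe n => exact le_iSup (fun n : ℕ => f n) n

noncomputable def natSingle (n : ℕ) : C(OnePoint ℕ, ℝ) :=
  continuousMapMkNat (Pi.single n (1 : ℝ)) 0 <| tendsto_const_nhds.congr' <|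
    (eventually_gt_atTop n).mono fun _ hm => (Pi.single_eq_of_ne (M := fun _ => ℝ) hm.ne' 1).symm

@[simp] lemma natSingle_apply_coe (n m : ℕ) : natSingle n m = if m = n then 1 else 0 :=
  Pi.single_apply n 1 m

@[simp] lemma natSingle_apply_infty (n : ℕ) : natSingle n ∞ = 0 := rfl

lemma natSingle_nonneg (n : ℕ) : 0 ≤ natSingle n := ContinuousMap.le_def.mpr fun k => by
  induction k using OnePoint.rec with
  | infty => simp
  | coe m => rw [natSingle_apply_coe]; split_ifs <;> norm_num

lemma sum_smul_natSingle_apply_coe (c : ℕ → ℝ) (N m : ℕ) :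
    (∑ i ∈ Finset.range N, c i • natSingle i) m = if m < N then c m else 0 := by
  simp [ContinuousMap.sum_apply]

theorem tendsto_add_sum_range_smul_natSingle (x : C(OnePoint ℕ, ℝ)) :
    Tendsto (fun N => x ∞ • 1 + ∑ i ∈ Finset.range N, (x i - x ∞) • natSingle i) atTop (𝓝 x) := by
  refine Metric.tendsto_atTop.mpr fun ε hε => ?_
  obtain ⟨N₀, hN₀⟩ := Metric.tendsto_atTop.mp ((continuous_iff_from_nat x).mp x.continuous) ε hε
  refine ⟨N₀, fun N hN => (ContinuousMap.dist_lt_iff hε).mpr fun k => ?_⟩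
  induction k using OnePoint.rec with
  | infty => simpa using hε
  | coe m =>
    simp only [ContinuousMap.add_apply, ContinuousMap.smul_apply, ContinuousMap.one_apply,
      sum_smul_natSingle_apply_coe, smul_eq_mul, mul_one]
    split_ifs with hm
    · simpa using hε
    · simpa [dist_comm] using hN₀ m (hN.trans (not_lt.mp hm))

theorem tendsto_sum_range_mul_sub (φ : C(OnePoint ℕ, ℝ) →L[ℝ] ℝ) (x : C(OnePoint ℕ, ℝ)) :
    Tendsto (fun N => ∑ i ∈ Finset.range N, φ (natSingle i) * (x i - x ∞)) atTop
      (𝓝 (φ x - x ∞ * φ 1)) := by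
  have := (φ.continuous.tendsto x).comp (tendsto_add_sum_range_smul_natSingle x)
  simpa [Function.comp_def, map_sum, mul_comm] using this.sub_const (x ∞ * φ 1)

end OnePoint

theorem IsState.exists_apply_eq_mul_infty_add_tsum {φ : C(OnePoint ℕ, ℝ) →L[ℝ] ℝ}
    (hφ : IsState φ) :
    ∃ (αinf : ℝ) (α : ℕ → ℝ), 0 ≤ αinf ∧ (∀ n, 0 ≤ α n) ∧ Summable α ∧
      αinf + ∑' n, α n = 1 ∧ ∀ x, φ x = αinf * x ∞ + ∑' n, α n * x n := by
  set α := fun n => φ (natSingle n)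
  have hα : ∀ n, 0 ≤ α n := fun n => hφ.1 _ (natSingle_nonneg n)
  have hsum_le : ∀ N, ∑ i ∈ Finset.range N, α i ≤ 1 := fun N => by
    have : ∑ i ∈ Finset.range N, α i = φ (∑ i ∈ Finset.range N, (1 : ℝ) • natSingle i) := by
      simp [α, map_sum]
    rw [this]
    refine hφ.apply_le_of_forall_le fun k => ?_
    induction k using OnePoint.rec with
    | infty => simp
    | coe m => rw [sum_smul_natSingle_apply_coe]; split_ifs <;> norm_num
  have hs : Summable α := summable_of_sum_range_le hα hsum_le
  refine ⟨1 - ∑' n, α n, α, sub_nonneg.mpr (Real.tsum_le_of_sum_range_le hα hsum_le), hα, hs,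
    by ring, fun x => ?_⟩
  have hxs : Summable fun n => α n * x n := hs.mul_right ‖x‖ |>.of_norm_bounded fun n => by
    rw [norm_mul, Real.norm_of_nonneg (hα n)]
    exact mul_le_mul_of_nonneg_left (x.norm_coe_le_norm n) (hα n)
  have hsum : HasSum (fun n => α n * (x n - x ∞)) (∑' n, α n * x n - (∑' n, α n) * x ∞) := by
    simpa only [mul_sub] using hxs.hasSum.sub (hs.hasSum.mul_right (x ∞))
  have := tendsto_nhds_unique (tendsto_sum_range_mul_sub φ x) hsum.tendsto_sum_nat
  rw [hφ.2] at this
  linarith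

theorem stmt_9 {X : Type*} [AddCommGroup X] [Module ℝ X]
    (C : Set X) (hC : C.Nonempty) (hCconv : Convex ℝ C)
    (h : ℕ → X → ℝ) (hinf : X → ℝ)
    (hconv : ∀ n, ConvexOn ℝ C (h n))
    (hlim : ∀ u ∈ C, Tendsto (fun n => h n u) atTop (𝓝 (hinf u))) :
    ∃ (αinf : ℝ) (α : ℕ → ℝ), 0 ≤ αinf ∧ (∀ n, 0 ≤ α n) ∧ Summable α ∧
      αinf + ∑' n, α n = 1 ∧
      (⨅ u : C, ((αinf * hinf u + ∑' n, α n * h n u : ℝ) : EReal)) =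
        ⨅ u : C, ⨆ n : ℕ, ((h n u : ℝ) : EReal) := by
  classical
  set F : X → C(OnePoint ℕ, ℝ) := fun u =>
    if hu : u ∈ C then continuousMapMkNat (h · u) (hinf u) (hlim u hu) else 0
  have hF_coe : ∀ u ∈ C, ∀ n : ℕ, F u n = h n u := fun u hu n => by
    simp only [F, dif_pos hu]; rfl
  have hF_infty : ∀ u ∈ C, F u ∞ = hinf u := fun u hu => by simp only [F, dif_pos hu]; rfl
  have hFconv : ConvexOn ℝ C F := ContinuousMap.convexOn_of_forall_apply hCconv fun k => by
    induction k using OnePoint.rec with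
    | infty =>
      exact (convexOn_of_tendsto (.of_forall hconv) hlim).congr fun u hu => (hF_infty u hu).symm
    | coe n => exact (hconv n).congr fun u hu => (hF_coe u hu n).symm
  obtain ⟨ψ, hψ, hψF⟩ := exists_isState_iInf_eq_iInf_iSup hC hFconv
  obtain ⟨αinf, α, hαinf, hα, hs, hone, hrep⟩ := hψ.exists_apply_eq_mul_infty_add_tsum
  refine ⟨αinf, α, hαinf, hα, hs, hone, ?_⟩
  calc ⨅ u : C, ((αinf * hinf u + ∑' n, α n * h n u : ℝ) : EReal)
      = ⨅ u : C, (ψ (F u) : EReal) := iInf_congr fun u => by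
        simp only [hrep, hF_coe u u.2, hF_infty u u.2]
    _ = ⨅ u : C, ⨆ k, (F u k : EReal) := hψF
    _ = ⨅ u : C, ⨆ n : ℕ, ((h n u : ℝ) : EReal) := iInf_congr fun u => by
      rw [← iSup_coe_eq_iSup_of_continuous (f := fun k => (F u k : EReal))
        (continuous_coe_real_ereal.comp (F u).continuous)]
      simp only [hF_coe u u.2]
end

section
/- Let $X$ be a real vector space, $C \subset X$ nonempty convex, and $h_n : C \to \mathbb{R}$ a sequence of convex functions converging pointwise to $h_\infty$. Then exactly one of the following holds: (A1) there exists $u_0 \in C$ with $\sup_{n \in \mathbb{N}} h_n(u_0) < 0$; or (A2) there exist nonnegative reals $(\alpha_\infty, \alpha_0, \alpha_1, \ldots)$ with $\alpha_\infty + \sum_{n \geq 0} \alpha_n = 1$ such that $\alpha_\infty h_\infty(u) + \sum_{n \geq 0} \alpha_n h_n(u) \geq 0$ for all $u \in C$. -/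
/-!
Weights `(α∞, α₀, α₁, …)` are encoded by `β = (α₀, α₁, …)`, a nonnegative sequence of mass at
most `1`, with `α∞ = 1 - ∑ βₙ`. These `β` form a compact set for the product topology, on which
`β ↦ h∞ u + ∑ βₙ (hₙ u - h∞ u)` is continuous because `hₙ u - h∞ u → 0`; so by compactness it
suffices to meet finitely many constraints `u₁, …, u_k` at once. The image of the `β` in `ℝᵏ` is
compact and convex; if it missed the nonnegative orthant, a separating functional would give weights
`wᵢ` with `hₙ (∑ wᵢ uᵢ) ≤ ∑ wᵢ hₙ uᵢ ≤ a < 0` for all `n`, i.e. (A1).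
Conversely, under (A1) the weighted sum at `u₀` is at most `⨆ n, hₙ u₀ < 0`.
-/

open Filter Topology Finset

def subProbSeq : Set (ℕ → ℝ) :=
  {β | (∀ n, 0 ≤ β n) ∧ ∀ N, ∑ n ∈ range N, β n ≤ 1}

lemma summable_of_mem_subProbSeq {β : ℕ → ℝ} (hβ : β ∈ subProbSeq) : Summable β :=
  summable_of_sum_range_le hβ.1 hβ.2

lemma tsum_le_one_of_mem_subProbSeq {β : ℕ → ℝ} (hβ : β ∈ subProbSeq) : ∑' n, β n ≤ 1 :=
  Real.tsum_le_of_sum_range_le hβ.1 hβ.2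

lemma zero_mem_subProbSeq : (0 : ℕ → ℝ) ∈ subProbSeq :=
  ⟨fun _ => le_rfl, fun N => by simp⟩

lemma single_mem_subProbSeq (m : ℕ) : Pi.single m 1 ∈ subProbSeq := by
  refine ⟨fun n => by by_cases hn : n = m <;> simp [hn], fun N => ?_⟩
  simp only [Pi.single_apply, sum_ite_eq', mem_range]
  split_ifs <;> norm_num

lemma isClosed_subProbSeq : IsClosed subProbSeq := by
  simp only [subProbSeq, Set.ofPred_and, Set.ofPred_forall]
  exact (isClosed_iInter fun n => isClosed_le continuous_const (continuous_apply n)).inter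
    (isClosed_iInter fun N =>
      isClosed_le (continuous_finsetSum _ fun n _ => continuous_apply n) continuous_const)

lemma isCompact_subProbSeq : IsCompact subProbSeq := by
  refine (isCompact_univ_pi fun _ => isCompact_Icc (a := (0 : ℝ)) (b := 1)).of_isClosed_subset
    isClosed_subProbSeq fun β hβ n _ => ⟨hβ.1 n, ?_⟩
  calc β n ≤ ∑ k ∈ range (n + 1), β k :=
        single_le_sum (fun k _ => hβ.1 k) (self_mem_range_succ n)
    _ ≤ 1 := hβ.2 (n + 1)

lemma convex_subProbSeq : Convex ℝ subProbSeq := by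
  intro β hβ β' hβ' p q hp hq hpq
  refine ⟨fun n => add_nonneg (mul_nonneg hp (hβ.1 n)) (mul_nonneg hq (hβ'.1 n)), fun N => ?_⟩
  simp only [Pi.add_apply, Pi.smul_apply, smul_eq_mul, sum_add_distrib, ← mul_sum]
  nlinarith [hβ.2 N, hβ'.2 N]

lemma Summable.mul_of_tendsto {β c : ℕ → ℝ} {L : ℝ} (hβ : Summable β)
    (hc : Tendsto c atTop (𝓝 L)) : Summable fun n => β n * c n := by
  obtain ⟨M, hM⟩ := hc.abs.bddAbove_range
  refine Summable.of_norm_bounded (hβ.abs.mul_right M) fun n => ?_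
  rw [Real.norm_eq_abs, abs_mul]
  exact mul_le_mul_of_nonneg_left (hM ⟨n, rfl⟩) (abs_nonneg _)

lemma abs_tsum_mul_sub_sum_range_le {β d : ℕ → ℝ} (hβ : β ∈ subProbSeq)
    (hd : Summable fun n => β n * d n) {N : ℕ} {ε : ℝ} (hN : ∀ n ≥ N, |d n| ≤ ε) :
    |∑' n, β n * d n - ∑ n ∈ range N, β n * d n| ≤ ε := by
  have hε : 0 ≤ ε := (abs_nonneg _).trans (hN N le_rfl)
  have hβs := summable_of_mem_subProbSeq hβ
  have htail : Summable fun n => β (n + N) := (summable_nat_add_iff N).mpr hβs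
  rw [← hd.sum_add_tsum_nat_add N, add_sub_cancel_left]
  calc |∑' n, β (n + N) * d (n + N)|
      ≤ ∑' n, |β (n + N) * d (n + N)| := by
        simpa only [Real.norm_eq_abs] using
          norm_tsum_le_tsum_norm ((summable_nat_add_iff N).mpr hd).norm
    _ ≤ ∑' n, β (n + N) * ε := by
        refine ((summable_nat_add_iff N).mpr hd).abs.tsum_le_tsum (fun n => ?_)
          (htail.mul_right ε)
        rw [abs_mul, abs_of_nonneg (hβ.1 _)]
        exact mul_le_mul_of_nonneg_left (hN _ (Nat.le_add_left N n)) (hβ.1 _)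
    _ = (∑' n, β (n + N)) * ε := tsum_mul_right
    _ ≤ 1 * ε := by
        gcongr
        exact (tsum_comp_le_tsum_of_inj hβs hβ.1 (add_left_injective N)).trans
          (tsum_le_one_of_mem_subProbSeq hβ)
    _ = ε := one_mul ε

lemma continuousOn_tsum_mul {d : ℕ → ℝ} (hd : Tendsto d atTop (𝓝 0)) :
    ContinuousOn (fun β : ℕ → ℝ => ∑' n, β n * d n) subProbSeq := by
  refine TendstoUniformlyOn.continuousOn (F := fun N β => ∑ n ∈ range N, β n * d n)
    (p := atTop) ?_ (Frequently.of_forall fun N => by fun_prop)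
  rw [Metric.tendstoUniformlyOn_iff]
  intro ε hε
  obtain ⟨N, hN⟩ := Metric.tendsto_atTop.mp hd (ε / 2) (half_pos hε)
  filter_upwards [eventually_ge_atTop N] with M hM β hβ
  rw [Real.dist_eq]
  calc _ ≤ ε / 2 := abs_tsum_mul_sub_sum_range_le hβ
          ((summable_of_mem_subProbSeq hβ).mul_of_tendsto hd)
          fun n hn => by simpa using (hN n (hM.trans hn)).le
    _ < ε := half_lt_self hε

noncomputable def mixWithLimit (L : ℝ) (c β : ℕ → ℝ) : ℝ :=
  L + ∑' n, β n * (c n - L)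

section mixWithLimit

variable {L : ℝ} {c : ℕ → ℝ}

lemma mixWithLimit_single (m : ℕ) : mixWithLimit L c (Pi.single m 1) = c m := by
  rw [mixWithLimit, tsum_eq_single m fun n hn => by simp [hn]]
  simp

lemma mixWithLimit_eq (hc : Tendsto c atTop (𝓝 L)) {β : ℕ → ℝ} (hβ : Summable β) :
    mixWithLimit L c β = (1 - ∑' n, β n) * L + ∑' n, β n * c n := by
  simp only [mixWithLimit, mul_sub]
  rw [(hβ.mul_of_tendsto hc).tsum_sub (hβ.mul_right L), tsum_mul_right]
  ring

lemma mixWithLimit_smul_add_smul (hc : Tendsto c atTop (𝓝 L)) {β β' : ℕ → ℝ}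
    (hβ : Summable β) (hβ' : Summable β') {p q : ℝ} (hpq : p + q = 1) :
    mixWithLimit L c (p • β + q • β') = p * mixWithLimit L c β + q * mixWithLimit L c β' := by
  have hd := tendsto_sub_nhds_zero_iff.mpr hc
  simp only [mixWithLimit, Pi.add_apply, Pi.smul_apply, smul_eq_mul, add_mul, mul_assoc]
  rw [((hβ.mul_of_tendsto hd).mul_left p).tsum_add ((hβ'.mul_of_tendsto hd).mul_left q),
    tsum_mul_left, tsum_mul_left]
  linear_combination L * hpq.symm

lemma continuousOn_mixWithLimit (hc : Tendsto c atTop (𝓝 L)) :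
    ContinuousOn (mixWithLimit L c) subProbSeq :=
  continuousOn_const.add (continuousOn_tsum_mul (tendsto_sub_nhds_zero_iff.mpr hc))

end mixWithLimit

section image

variable {ι : Type*} {L : ι → ℝ} {c : ι → ℕ → ℝ}

lemma isCompact_image_mixWithLimit (hc : ∀ i, Tendsto (c i) atTop (𝓝 (L i))) :
    IsCompact ((fun β i => mixWithLimit (L i) (c i) β) '' subProbSeq) :=
  isCompact_subProbSeq.image_of_continuousOn
    (continuousOn_pi.mpr fun i => continuousOn_mixWithLimit (hc i))

lemma convex_image_mixWithLimit (hc : ∀ i, Tendsto (c i) atTop (𝓝 (L i))) :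
    Convex ℝ ((fun β i => mixWithLimit (L i) (c i) β) '' subProbSeq) := by
  rintro _ ⟨β, hβ, rfl⟩ _ ⟨β', hβ', rfl⟩ p q hp hq hpq
  refine ⟨p • β + q • β', convex_subProbSeq hβ hβ' hp hq hpq, funext fun i => ?_⟩
  simp only [Pi.add_apply, Pi.smul_apply, smul_eq_mul]
  exact mixWithLimit_smul_add_smul (hc i) (summable_of_mem_subProbSeq hβ)
    (summable_of_mem_subProbSeq hβ') hpq

end image

lemma exists_mem_stdSimplex_forall_sum_mul_le_neg {ι : Type*} [Fintype ι] {K : Set (ι → ℝ)}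
    (hKconv : Convex ℝ K) (hK : IsCompact K) (hKne : K.Nonempty) (hdisj : Disjoint K (Set.Ici 0)) :
    ∃ w ∈ stdSimplex ℝ ι, ∃ a < 0, ∀ y ∈ K, ∑ i, w i * y i ≤ a := by
  classical
  obtain ⟨f, a, b, hfa, hab, hfb⟩ :=
    geometric_hahn_banach_compact_closed hKconv hK (convex_Ici 0) isClosed_Ici hdisj
  have hb : b < 0 := by simpa using hfb 0 Set.self_mem_Ici
  have hf_nonneg : ∀ y ∈ Set.Ici (0 : ι → ℝ), 0 ≤ f y := by
    intro y hy
    by_contra! hfy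
    have := hfb ((b / f y) • y)
      (Set.mem_Ici.mpr (smul_nonneg (div_nonneg_of_nonpos hb.le hfy.le) hy))
    rw [map_smul, smul_eq_mul, div_mul_cancel₀ _ hfy.ne] at this
    exact this.false
  set e : ι → ι → ℝ := fun i j => if i = j then 1 else 0
  have hf : ∀ y, f y = ∑ i, y i * f (e i) := fun y =>
    f.toLinearMap.pi_apply_eq_sum_univ y
  have he : ∀ i, 0 ≤ f (e i) := fun i => hf_nonneg _ fun j => by
    simp only [e]; split_ifs <;> norm_num
  obtain ⟨y₀, hy₀⟩ := hKne
  set S := ∑ i, f (e i)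
  have hS : 0 < S := by
    refine (sum_nonneg fun i _ => he i).lt_of_ne fun hS0 => ?_
    have hzero := (sum_eq_zero_iff_of_nonneg fun i _ => he i).mp hS0.symm
    have : f y₀ = 0 := by
      rw [hf]
      exact sum_eq_zero fun i hi => by rw [hzero i hi, mul_zero]
    linarith [hfa y₀ hy₀]
  refine ⟨fun i => f (e i) / S, ⟨fun i => div_nonneg (he i) hS.le, ?_⟩, a / S,
    div_neg_of_neg_of_pos (hab.trans hb) hS, fun y hy => ?_⟩
  · rw [← sum_div, div_self hS.ne']
  · calc ∑ i, f (e i) / S * y i = f y / S := by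
          rw [hf, sum_div]
          exact sum_congr rfl fun i _ => by ring
      _ ≤ a / S := div_le_div_of_nonneg_right (hfa y hy).le hS.le

lemma exists_mem_subProbSeq_forall_zero_le_mixWithLimit_of_fintype {X : Type*} [AddCommGroup X]
    [Module ℝ X] {C : Set X} (hC : Convex ℝ C) {h : ℕ → X → ℝ} {hinf : X → ℝ}
    (hconv : ∀ n, ConvexOn ℝ C (h n))
    (hlim : ∀ u ∈ C, Tendsto (fun n => h n u) atTop (𝓝 (hinf u)))
    (hsup : ∀ u ∈ C, ∀ a < 0, ∃ n, a < h n u)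
    {ι : Type*} [Fintype ι] (u : ι → X) (hu : ∀ i, u i ∈ C) :
    ∃ β ∈ subProbSeq, ∀ i, 0 ≤ mixWithLimit (hinf (u i)) (fun n => h n (u i)) β := by
  set Ψ : (ℕ → ℝ) → ι → ℝ := fun β i => mixWithLimit (hinf (u i)) (fun n => h n (u i)) β
  by_contra! hneg
  have hdisj : Disjoint (Ψ '' subProbSeq) (Set.Ici 0) := by
    rw [Set.disjoint_left]
    rintro _ ⟨β, hβ, rfl⟩ hnn
    obtain ⟨i, hi⟩ := hneg β hβ
    exact hi.not_ge (hnn i)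
  have hc : ∀ i, Tendsto (fun n => h n (u i)) atTop (𝓝 (hinf (u i))) := fun i => hlim _ (hu i)
  obtain ⟨w, hw, a, ha, hwa⟩ := exists_mem_stdSimplex_forall_sum_mul_le_neg
    (convex_image_mixWithLimit hc) (isCompact_image_mixWithLimit hc)
    ⟨_, Set.mem_image_of_mem Ψ zero_mem_subProbSeq⟩ hdisj
  obtain ⟨n, hn⟩ := hsup _ (hC.sum_mem (fun i _ => hw.1 i) hw.2 fun i _ => hu i) a ha
  have hjensen := (hconv n).map_sum_le (fun i _ => hw.1 i) hw.2 fun i _ => hu i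
  have hsingle := hwa _ (Set.mem_image_of_mem Ψ (single_mem_subProbSeq n))
  simp only [Ψ, mixWithLimit_single, smul_eq_mul] at hjensen hsingle
  linarith

lemma exists_mem_subProbSeq_forall_zero_le_mixWithLimit {X : Type*} [AddCommGroup X]
    [Module ℝ X] {C : Set X} (hC : Convex ℝ C) {h : ℕ → X → ℝ} {hinf : X → ℝ}
    (hconv : ∀ n, ConvexOn ℝ C (h n))
    (hlim : ∀ u ∈ C, Tendsto (fun n => h n u) atTop (𝓝 (hinf u)))
    (hsup : ∀ u ∈ C, ∀ a < 0, ∃ n, a < h n u) :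
    ∃ β ∈ subProbSeq, ∀ u ∈ C, 0 ≤ mixWithLimit (hinf u) (fun n => h n u) β := by
  obtain ⟨β, hβ, hβC⟩ := isCompact_subProbSeq.inter_iInter_nonempty
    (fun u : C => subProbSeq ∩ mixWithLimit (hinf u) (fun n => h n u) ⁻¹' Set.Ici 0)
    (fun u => (continuousOn_mixWithLimit (hlim u u.2)).preimage_isClosed_of_isClosed
      isClosed_subProbSeq isClosed_Ici)
    fun s => by
      obtain ⟨β, hβ, hβs⟩ := exists_mem_subProbSeq_forall_zero_le_mixWithLimit_of_fintype
        hC hconv hlim hsup (fun i : s => i.1.1) fun i => i.1.2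
      exact ⟨β, hβ, Set.mem_iInter₂.mpr fun u hu => ⟨hβ, hβs ⟨u, hu⟩⟩⟩
  exact ⟨β, hβ, fun u hu => (Set.mem_iInter.mp hβC ⟨u, hu⟩).2⟩

lemma mul_add_tsum_mul_le {αinf L s : ℝ} {α c : ℕ → ℝ} (hαinf : 0 ≤ αinf) (hα : ∀ n, 0 ≤ α n)
    (hαs : Summable α) (htot : αinf + ∑' n, α n = 1) (hc : Tendsto c atTop (𝓝 L))
    (hcs : ∀ n, c n ≤ s) :
    αinf * L + ∑' n, α n * c n ≤ s :=
  calc αinf * L + ∑' n, α n * c n ≤ αinf * s + ∑' n, α n * s := by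
        refine add_le_add (mul_le_mul_of_nonneg_left (le_of_tendsto' hc hcs) hαinf) ?_
        exact (hαs.mul_of_tendsto hc).tsum_le_tsum
          (fun n => mul_le_mul_of_nonneg_left (hcs n) (hα n)) (hαs.mul_right s)
    _ = s := by rw [tsum_mul_right, ← add_mul, htot, one_mul]

theorem stmt_12_general {X : Type*} [AddCommGroup X] [Module ℝ X]
    (C : Set X) (hCconv : Convex ℝ C)
    (h : ℕ → X → ℝ) (hinf : X → ℝ)
    (hconv : ∀ n, ConvexOn ℝ C (h n))
    (hlim : ∀ u ∈ C, Tendsto (fun n => h n u) atTop (𝓝 (hinf u))) :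
    Xor'
      (∃ u₀ ∈ C, (⨆ n : ℕ, h n u₀) < 0)
      (∃ (αinf : ℝ) (α : ℕ → ℝ), 0 ≤ αinf ∧ (∀ n, 0 ≤ α n) ∧ Summable α ∧
        αinf + ∑' n, α n = 1 ∧
        ∀ u ∈ C, 0 ≤ αinf * hinf u + ∑' n, α n * h n u) := by
  by_cases hA : ∃ u₀ ∈ C, (⨆ n : ℕ, h n u₀) < 0
  · refine Or.inl ⟨hA, ?_⟩
    rintro ⟨αinf, α, hαinf, hα, hαs, htot, hge⟩
    obtain ⟨u₀, hu₀, hneg⟩ := hA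
    have hbdd : BddAbove (Set.range fun n => h n u₀) := by
      by_contra hunb
      exact hneg.ne (Real.iSup_of_not_bddAbove hunb)
    exact (hge u₀ hu₀).not_gt <| (mul_add_tsum_mul_le hαinf hα hαs htot (hlim u₀ hu₀)
      (le_ciSup hbdd)).trans_lt hneg
  · refine Or.inr ⟨?_, hA⟩
    push Not at hA
    obtain ⟨β, hβ, hβC⟩ := exists_mem_subProbSeq_forall_zero_le_mixWithLimit hCconv hconv hlim
      fun u hu a ha => exists_lt_of_lt_ciSup (ha.trans_le (hA u hu))
    have hβs := summable_of_mem_subProbSeq hβ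
    refine ⟨1 - ∑' n, β n, β, sub_nonneg.mpr (tsum_le_one_of_mem_subProbSeq hβ), hβ.1, hβs,
      by ring, fun u hu => ?_⟩
    rw [← mixWithLimit_eq (hlim u hu) hβs]
    exact hβC u hu

theorem stmt_12 {X : Type*} [AddCommGroup X] [Module ℝ X]
    (C : Set X) (hC : C.Nonempty) (hCconv : Convex ℝ C)
    (h : ℕ → X → ℝ) (hinf : X → ℝ)
    (hconv : ∀ n, ConvexOn ℝ C (h n))
    (hlim : ∀ u ∈ C, Tendsto (fun n => h n u) atTop (𝓝 (hinf u))) :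
    Xor'
      (∃ u₀ ∈ C, (⨆ n : ℕ, h n u₀) < 0)
      (∃ (αinf : ℝ) (α : ℕ → ℝ), 0 ≤ αinf ∧ (∀ n, 0 ≤ α n) ∧ Summable α ∧
        αinf + ∑' n, α n = 1 ∧
        ∀ u ∈ C, 0 ≤ αinf * hinf u + ∑' n, α n * h n u) :=
  stmt_12_general C hCconv h hinf hconv hlim
end

section
/- Let $E$ be a real normed space, $\Omega \subset E$ open, $\hat{x} \in \Omega$, and $(h_n)$ a sequence of functions Lipschitz on $B(\hat{x},r)\cap\Omega$ satisfying property (H) at $\hat{x}$: each $D^+ h_n(\hat{x})$ is sublinear, and there exists $h_\infty$ Lipschitz on $B(\hat{x},r)\cap\Omega$ with $h_\infty(\hat{x}) = \lim_n h_n(\hat{x})$ and $\|h_n - h_\infty\|_{\hat{x},r} \to 0$. Then either the set $\{(x,t) \in \Omega \times [0,1] : \sup_{n} (h_n(x) - (1-t) h_n(\hat{x})) < 0\}$ is nonempty, or there exist nonnegative reals $(\alpha_\infty, \alpha_0, \alpha_1, \ldots)$ with $\alpha_\infty + \sum_n \alpha_n = 1$, $\alpha_\infty h_\infty(\hat{x})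 + \sum_n \alpha_n h_n(\hat{x}) \geq 0$, and $\alpha_\infty D^+ h_\infty(\hat{x})(u) + \sum_n \alpha_n D^+ h_n(\hat{x})(u) \geq 0$ for all $u \in E$. -/
/-!
If the first alternative fails, then for every `μ ≥ 0` and direction `u` the sequence
`μ hₙ(x̂) + D⁺hₙ(x̂)(u)` has nonnegative supremum. Otherwise a short step `x̂ + τ u`, with
`t = τ μ`, would make every `hₙ(x̂ + τ u) - (1 - t) hₙ(x̂)` less than a fixed negative number:
convergence in the Lipschitz seminorm makes the difference quotients of `hₙ` converge to those of
`h∞` uniformly in `n` and `τ`, so only finitely many `n` need separate care.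

By sublinearity, the bounded sequences dominating some `μ hₙ(x̂) + D⁺hₙ(x̂)(u)` form a convex cone
in `ℓ^∞` disjoint from the open cone of uniformly negative sequences, and Hahn–Banach yields a mean
`L` (a linear functional bounded by the supremum) that is nonnegative on it. On convergent
sequences a mean is `g ↦ α∞ lim g + ∑ αₙ gₙ` with `αₙ = L(eₙ)`; evaluating it at `(hₙ(x̂))ₙ` and
`(D⁺hₙ(x̂)(u))ₙ` gives the weights.
-/

open Filter Topology

open scoped NNReal BoundedContinuousFunction

section Limsup

variable {α : Type*} {l : Filter α} [l.NeBot] {f g : α → ℝ} {a B : ℝ}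

lemma limsup_le_limsup_add_of_le_add (hfg : ∀ᶠ τ in l, f τ ≤ g τ + a)
    (hf : ∀ᶠ τ in l, |f τ| ≤ B) (hg : ∀ᶠ τ in l, |g τ| ≤ B) :
    limsup f l ≤ limsup g l + a := by
  have hg_bdd : l.IsBoundedUnder (· ≤ ·) g := isBoundedUnder_of_eventually_le (a := B) <|
    hg.mono fun _ h => (abs_le.1 h).2
  have hg_cobdd : l.IsCoboundedUnder (· ≤ ·) g := (isBoundedUnder_of_eventually_ge (a := -B) <|
    hg.mono fun _ h => (abs_le.1 h).1).isCoboundedUnder_le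
  have hf_cobdd : l.IsCoboundedUnder (· ≤ ·) f := (isBoundedUnder_of_eventually_ge (a := -B) <|
    hf.mono fun _ h => (abs_le.1 h).1).isCoboundedUnder_le
  rw [← limsup_add_const l g a hg_bdd hg_cobdd]
  exact limsup_le_limsup hfg hf_cobdd <| isBoundedUnder_of_eventually_le (a := B + a) <|
    hg.mono fun _ h => by linarith [(abs_le.1 h).2]

lemma abs_limsup_sub_limsup_le_s13 (hfg : ∀ᶠ τ in l, |f τ - g τ| ≤ a)
    (hf : ∀ᶠ τ in l, |f τ| ≤ B) (hg : ∀ᶠ τ in l, |g τ| ≤ B) :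
    |limsup f l - limsup g l| ≤ a := by
  have hfg' := limsup_le_limsup_add_of_le_add
    (hfg.mono fun _ h => by linarith [(abs_le.1 h).2]) hf hg
  have hgf' := limsup_le_limsup_add_of_le_add
    (hfg.mono fun _ h => by linarith [(abs_le.1 h).1]) hg hf
  rw [abs_le]; constructor <;> linarith

end Limsup

lemma Filter.eventually_forall_of_eventually_forall_ge {α : Type*} {l : Filter α}
    {p : ℕ → α → Prop} (N : ℕ) (hp : ∀ n < N, ∀ᶠ a in l, p n a)
    (htail : ∀ᶠ a in l, ∀ n ≥ N, p n a) : ∀ᶠ a in l, ∀ n, p n a := by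
  filter_upwards [(eventually_all_finset (Finset.range N)).2
    fun n hn => hp n (Finset.mem_range.1 hn), htail] with a hhead htail n
  rcases lt_or_ge n N with hn | hn
  exacts [hhead n (Finset.mem_range.2 hn), htail n hn]

lemma lipschitzOnWith_of_abs_sub_le {E : Type*} [SeminormedAddCommGroup E] {f : E → ℝ} {s : Set E}
    {K : ℝ} (hf : ∀ y ∈ s, ∀ z ∈ s, |f y - f z| ≤ K * ‖y - z‖) :
    LipschitzOnWith K.toNNReal f s :=
  LipschitzOnWith.of_dist_le' (by simpa only [dist_eq_norm, Real.norm_eq_abs] using hf)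

section DifferenceQuotient

variable {E : Type*} [NormedAddCommGroup E] [NormedSpace ℝ E] {s : Set E} {x u : E} {τ : ℝ}

noncomputable def diffQuot (f : E → ℝ) (x u : E) (τ : ℝ) : ℝ := (f (x + τ • u) - f x) / τ

lemma dini_eq_limsup_diffQuot (f : E → ℝ) : dini f x u = limsup (diffQuot f x u) (𝓝[>] 0) := rfl

lemma diffQuot_sub (f g : E → ℝ) :
    diffQuot (f - g) x u τ = diffQuot f x u τ - diffQuot g x u τ := by
  simp only [diffQuot, Pi.sub_apply]; ring

lemma eventually_add_smul_mem (hs : s ∈ 𝓝 x) (u : E) : ∀ᶠ τ in 𝓝[>] (0 : ℝ), x + τ • u ∈ s := by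
  have : Tendsto (fun τ : ℝ => x + τ • u) (𝓝 0) (𝓝 x) := by
    simpa using tendsto_const_nhds.add ((tendsto_id (x := 𝓝 (0 : ℝ))).smul_const u)
  exact (this.mono_left nhdsWithin_le_nhds).eventually_mem hs

variable {f : E → ℝ} {K : ℝ≥0}

lemma LipschitzOnWith.abs_diffQuot_le (hf : LipschitzOnWith K f s) (hx : x ∈ s) (hτ : 0 < τ)
    (hxτ : x + τ • u ∈ s) : |diffQuot f x u τ| ≤ K * ‖u‖ := by
  have := hf.dist_le_mul _ hxτ _ hx
  rw [Real.dist_eq, dist_eq_norm, add_sub_cancel_left, norm_smul, Real.norm_of_nonneg hτ.le]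
    at this
  rw [diffQuot, abs_div, abs_of_pos hτ, div_le_iff₀ hτ]
  linarith

lemma LipschitzOnWith.eventually_abs_diffQuot_le (hf : LipschitzOnWith K f s) (hs : s ∈ 𝓝 x)
    (u : E) : ∀ᶠ τ in 𝓝[>] (0 : ℝ), |diffQuot f x u τ| ≤ K * ‖u‖ := by
  filter_upwards [eventually_add_smul_mem hs u, self_mem_nhdsWithin] with τ hxτ hτ
  exact hf.abs_diffQuot_le (mem_of_mem_nhds hs) hτ hxτ

lemma LipschitzOnWith.isBoundedUnder_le_diffQuot (hf : LipschitzOnWith K f s) (hs : s ∈ 𝓝 x)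
    (u : E) : (𝓝[>] (0 : ℝ)).IsBoundedUnder (· ≤ ·) (diffQuot f x u) :=
  isBoundedUnder_of_eventually_le <|
    (hf.eventually_abs_diffQuot_le hs u).mono fun _ h => (abs_le.1 h).2

end DifferenceQuotient

section LipschitzSeminormConvergence

def TendstoLipschitzSeminorm {E : Type*} [PseudoMetricSpace E] (f : ℕ → E → ℝ) (g : E → ℝ)
    (s : Set E) : Prop :=
  ∀ ε : ℝ≥0, 0 < ε → ∃ N, ∀ n ≥ N, LipschitzOnWith ε (f n - g) s

variable {E : Type*} [NormedAddCommGroup E] [NormedSpace ℝ E] {s : Set E} {x : E}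
  {f : ℕ → E → ℝ} {g : E → ℝ} {K : ℕ → ℝ≥0} {K' : ℝ≥0}

lemma eventually_abs_diffQuot_sub_le (hs : s ∈ 𝓝 x)
    (hsem : TendstoLipschitzSeminorm f g s) (u : E) {η : ℝ}
    (hη : 0 < η) :
    ∃ N, ∀ᶠ τ in 𝓝[>] (0 : ℝ), ∀ n ≥ N, |diffQuot (f n) x u τ - diffQuot g x u τ| ≤ η := by
  obtain ⟨ε, hε, hεu⟩ := exists_pos_mul_lt hη ‖u‖
  obtain ⟨N, hN⟩ := hsem ε.toNNReal (Real.toNNReal_pos.2 hε)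
  refine ⟨N, ?_⟩
  filter_upwards [eventually_add_smul_mem hs u, self_mem_nhdsWithin] with τ hxτ hτ n hn
  rw [← diffQuot_sub]
  have := (hN n hn).abs_diffQuot_le (mem_of_mem_nhds hs) hτ hxτ
  rw [Real.coe_toNNReal _ hε.le] at this
  linarith

lemma tendsto_dini (hs : s ∈ 𝓝 x) (hf : ∀ n, LipschitzOnWith (K n) (f n) s)
    (hg : LipschitzOnWith K' g s)
    (hsem : TendstoLipschitzSeminorm f g s) (u : E) :
    Tendsto (fun n => dini (f n) x u) atTop (𝓝 (dini g x u)) := by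
  refine Metric.tendsto_atTop.2 fun η hη => ?_
  obtain ⟨N, hN⟩ := eventually_abs_diffQuot_sub_le hs hsem u (half_pos hη)
  refine ⟨N, fun n hn => ?_⟩
  have := abs_limsup_sub_limsup_le_s13 (hN.mono fun _ h => h n hn)
    ((hf n).eventually_abs_diffQuot_le hs u |>.mono fun _ h => h.trans (le_max_left _ _))
    (hg.eventually_abs_diffQuot_le hs u |>.mono fun _ h => h.trans (le_max_right _ _))
  rw [Real.dist_eq]
  exact this.trans_lt (half_lt_self hη)

end LipschitzSeminormConvergence

section DescentAlongADirection

variable {E : Type*} [NormedAddCommGroup E] [NormedSpace ℝ E] {s : Set E} {x u : E}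
  {f : ℕ → E → ℝ} {g : E → ℝ} {K : ℕ → ℝ≥0} {K' : ℝ≥0}

lemma eventually_forall_add_diffQuot_lt (hs : s ∈ 𝓝 x) (hf : ∀ n, LipschitzOnWith (K n) (f n) s)
    (hg : LipschitzOnWith K' g s) (hval : Tendsto (f · x) atTop (𝓝 (g x)))
    (hsem : TendstoLipschitzSeminorm f g s) {μ c c' : ℝ}
    (hle : ∀ n, μ * f n x + dini (f n) x u ≤ c) (hcc' : c < c') :
    ∀ᶠ τ in 𝓝[>] (0 : ℝ), ∀ n, μ * f n x + diffQuot (f n) x u τ < c' := by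
  set η := (c' - c) / 3 with hη_def
  have hη : 0 < η := by positivity
  have hg_le : μ * g x + dini g x u ≤ c :=
    le_of_tendsto' ((hval.const_mul μ).add (tendsto_dini hs hf hg hsem u)) hle
  obtain ⟨N₁, hN₁⟩ := eventually_abs_diffQuot_sub_le hs hsem u hη
  obtain ⟨N₂, hN₂⟩ := Metric.tendsto_atTop.1 (hval.const_mul μ) η hη
  refine eventually_forall_of_eventually_forall_ge (max N₁ N₂) (fun n _ => ?_) ?_
  · have : dini (f n) x u < c' - μ * f n x := by linarith [hle n]
    rw [dini_eq_limsup_diffQuot] at this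
    filter_upwards [eventually_lt_of_limsup_lt this ((hf n).isBoundedUnder_le_diffQuot hs u)]
      with τ hτ
    linarith
  · have : dini g x u < c + η - μ * g x := by linarith
    rw [dini_eq_limsup_diffQuot] at this
    filter_upwards [hN₁, eventually_lt_of_limsup_lt this (hg.isBoundedUnder_le_diffQuot hs u)]
      with τ hclose hτ n hn
    have h₁ := (abs_le.1 (hclose n (le_of_max_le_left hn))).2
    have h₂ := (abs_le.1 (Real.dist_eq _ _ ▸ hN₂ n (le_of_max_le_right hn)).le).2
    linarith

theorem exists_forall_le_neg_of_forall_dini_le {Ω : Set E} (hΩ : Ω ∈ 𝓝 x) (hs : s ∈ 𝓝 x)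
    (hf : ∀ n, LipschitzOnWith (K n) (f n) s) (hg : LipschitzOnWith K' g s)
    (hval : Tendsto (f · x) atTop (𝓝 (g x)))
    (hsem : TendstoLipschitzSeminorm f g s) {μ c : ℝ}
    (hμ : 0 ≤ μ) (hc : c < 0) (hle : ∀ n, μ * f n x + dini (f n) x u ≤ c) :
    ∃ y ∈ Ω, ∃ t ∈ Set.Icc (0 : ℝ) 1, ∃ c' < (0 : ℝ), ∀ n, f n y - (1 - t) * f n x ≤ c' := by
  have hsmall : ∀ᶠ τ in 𝓝[>] (0 : ℝ), τ * μ < 1 := by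
    have : Tendsto (fun τ : ℝ => τ * μ) (𝓝 0) (𝓝 0) := by
      simpa using (tendsto_id (x := 𝓝 (0 : ℝ))).mul_const μ
    exact (this.mono_left nhdsWithin_le_nhds).eventually (gt_mem_nhds one_pos)
  obtain ⟨τ, hτ, hτΩ, hτμ, hdesc⟩ := (eventually_mem_nhdsWithin.and
    ((eventually_add_smul_mem hΩ u).and (hsmall.and (eventually_forall_add_diffQuot_lt hs hf hg
      hval hsem hle (show c < c / 2 by linarith))))).exists
  have hτ : 0 < τ := hτ
  refine ⟨x + τ • u, hτΩ, τ * μ, ⟨by positivity, hτμ.le⟩, τ * (c / 2), by nlinarith, fun n => ?_⟩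
  have : f n (x + τ • u) - (1 - τ * μ) * f n x = τ * (μ * f n x + diffQuot (f n) x u τ) := by
    rw [diffQuot]; field_simp; ring
  rw [this]
  exact mul_le_mul_of_nonneg_left (hdesc n).le hτ.le

end DescentAlongADirection

section Means

open BoundedContinuousFunction

variable {α : Type*} [TopologicalSpace α]

def uniformlyNegative : Set (α →ᵇ ℝ) := {g | ∃ c < 0, ∀ a, g a ≤ c}

lemma isOpen_uniformlyNegative : IsOpen (uniformlyNegative : Set (α →ᵇ ℝ)) := by
  refine Metric.isOpen_iff.2 fun g ⟨c, hc, hg⟩ => ⟨-c / 2, by linarith, fun g' hg' => ?_⟩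
  refine ⟨c / 2, by linarith, fun a => ?_⟩
  have := (abs_le.1 (Real.dist_eq _ _ ▸ (dist_coe_le_dist a).trans (Metric.mem_ball.1 hg').le)).2
  linarith [hg a]

lemma convex_uniformlyNegative : Convex ℝ (uniformlyNegative : Set (α →ᵇ ℝ)) := by
  rintro g ⟨c, hc, hg⟩ g' ⟨c', hc', hg'⟩ a b ha hb hab
  refine ⟨max c c', max_lt hc hc', fun x => ?_⟩
  have h₁ : a * g x ≤ a * max c c' := mul_le_mul_of_nonneg_left ((hg x).trans (le_max_left _ _)) ha
  have h₂ : b * g' x ≤ b * max c c' :=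
    mul_le_mul_of_nonneg_left ((hg' x).trans (le_max_right _ _)) hb
  have h₃ : a * max c c' + b * max c c' = max c c' := by rw [← add_mul, hab, one_mul]
  simp only [coe_add, coe_smul, Pi.add_apply, smul_eq_mul]
  linarith

def IsMean (L : (α →ᵇ ℝ) →L[ℝ] ℝ) : Prop := ∀ g M, (∀ a, g a ≤ M) → L g ≤ M

namespace IsMean

variable {L : (α →ᵇ ℝ) →L[ℝ] ℝ}

lemma le_apply (hL : IsMean L) {g : α →ᵇ ℝ} {M : ℝ} (hg : ∀ a, M ≤ g a) : M ≤ L g := by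
  have := hL (-g) (-M) fun a => by simp [hg a]
  rw [map_neg] at this
  linarith

lemma nonneg (hL : IsMean L) {g : α →ᵇ ℝ} (hg : ∀ a, 0 ≤ g a) : 0 ≤ L g := hL.le_apply hg

lemma abs_le (hL : IsMean L) {g : α →ᵇ ℝ} {M : ℝ} (hg : ∀ a, |g a| ≤ M) : |L g| ≤ M :=
  _root_.abs_le.2 ⟨hL.le_apply fun a => by linarith [(_root_.abs_le.1 (hg a)).1],
    hL g M fun a => (_root_.abs_le.1 (hg a)).2⟩

lemma map_one (hL : IsMean L) : L 1 = 1 :=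
  le_antisymm (hL 1 1 fun _ => le_rfl) (hL.le_apply fun _ => le_rfl)

end IsMean

theorem exists_isMean_nonneg_on_convexCone (W : ConvexCone ℝ (α →ᵇ ℝ)) (hW₀ : 0 ∈ W)
    (hW : ∀ w ∈ W, ∀ c < 0, ∃ a, c < w a) :
    ∃ L : (α →ᵇ ℝ) →L[ℝ] ℝ, IsMean L ∧ ∀ w ∈ W, 0 ≤ L w := by
  have hdisj : Disjoint uniformlyNegative (W : Set (α →ᵇ ℝ)) :=
    Set.disjoint_left.2 fun g ⟨c, hc, hg⟩ hgW => by
      obtain ⟨a, ha⟩ := hW g hgW c hc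
      linarith [hg a]
  obtain ⟨f, u, hneg, hWu⟩ := geometric_hahn_banach_open convex_uniformlyNegative
    isOpen_uniformlyNegative W.convex hdisj
  have hu : u ≤ 0 := by simpa using hWu 0 hW₀
  have hf₁ : 0 < f 1 := by
    have := hneg (-1) ⟨-1, by norm_num, fun a => by simp⟩
    rw [map_neg] at this
    linarith
  refine ⟨(f 1)⁻¹ • f, fun g M hg => ?_, fun w hw => ?_⟩
  · rw [_root_.smul_apply, smul_eq_mul, inv_mul_le_iff₀ hf₁]
    refine le_of_forall_pos_lt_add fun ε hε => ?_
    have hmem : g - (M + ε / f 1) • 1 ∈ uniformlyNegative :=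
      ⟨-(ε / f 1), by simp [hε, hf₁], fun a => by
        simp only [coe_sub, coe_smul, coe_one, Pi.sub_apply, Pi.one_apply, smul_eq_mul, mul_one]
        linarith [hg a]⟩
    have := hneg _ hmem
    rw [map_sub, map_smul, smul_eq_mul, add_mul, div_mul_cancel₀ _ hf₁.ne'] at this
    linarith
  · rw [_root_.smul_apply, smul_eq_mul]
    refine mul_nonneg (inv_nonneg.2 hf₁.le) (not_lt.1 fun hw' => ?_)
    -- scaling `w` by `u / f w + 1` pushes `f` strictly below `u`
    have hscale : 0 < u / f w + 1 := by
      have : 0 ≤ u / f w := div_nonneg_of_nonpos hu hw'.le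
      linarith
    have := hWu _ (W.smul_mem hscale hw)
    rw [map_smul, smul_eq_mul, add_mul, div_mul_cancel₀ _ hw'.ne] at this
    linarith

end Means

section MeansOnSequences

open BoundedContinuousFunction

noncomputable def ofTendsto {g : ℕ → ℝ} {l : ℝ} (hg : Tendsto g atTop (𝓝 l)) : ℕ →ᵇ ℝ :=
  mkOfDiscrete g _
    (Metric.isBounded_range_iff.1 (Metric.isBounded_range_of_tendsto g hg)).choose_spec

@[simp] lemma coe_ofTendsto {g : ℕ → ℝ} {l : ℝ} (hg : Tendsto g atTop (𝓝 l)) :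
    ⇑(ofTendsto hg) = g := rfl

noncomputable def basisVec (n : ℕ) : ℕ →ᵇ ℝ :=
  ofNormedAddCommGroupDiscrete (Pi.single n 1) 1 fun m => by
    rcases eq_or_ne m n with rfl | h <;> simp [*]

@[simp] lemma basisVec_apply (n m : ℕ) : basisVec n m = (Pi.single n 1 : ℕ → ℝ) m := rfl

lemma sum_smul_basisVec_apply (c : ℕ → ℝ) (N m : ℕ) :
    (∑ n ∈ Finset.range N, c n • basisVec n) m = if m < N then c m else 0 := by
  simp [Finset.sum_apply, Pi.single_apply]

namespace IsMean

variable {L : (ℕ →ᵇ ℝ) →L[ℝ] ℝ}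

lemma abs_sub_partialSum_le (hL : IsMean L) {G : ℕ →ᵇ ℝ} {l ε : ℝ} {N : ℕ}
    (hG : ∀ m ≥ N, |G m - l| ≤ ε) (hε : 0 ≤ ε) :
    |L G - (l + ∑ n ∈ Finset.range N, L (basisVec n) * (G n - l))| ≤ ε := by
  have : L G - (l + ∑ n ∈ Finset.range N, L (basisVec n) * (G n - l)) =
      L (G - l • 1 - ∑ n ∈ Finset.range N, (G n - l) • basisVec n) := by
    simp only [map_sub, map_smul, map_sum, hL.map_one, smul_eq_mul, mul_one, mul_comm]
    ring
  rw [this]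
  refine hL.abs_le fun m => ?_
  simp only [coe_sub, coe_smul, coe_one, Pi.sub_apply, Pi.one_apply, smul_eq_mul,
    mul_one, sum_smul_basisVec_apply]
  split_ifs with hm
  · simpa using hε
  · simpa using hG m (not_lt.1 hm)

theorem exists_weights (hL : IsMean L) :
    ∃ (αinf : ℝ) (α : ℕ → ℝ), 0 ≤ αinf ∧ (∀ n, 0 ≤ α n) ∧ Summable α ∧ αinf + ∑' n, α n = 1 ∧
      ∀ {g : ℕ → ℝ} {l : ℝ} (hg : Tendsto g atTop (𝓝 l)),
        L (ofTendsto hg) = αinf * l + ∑' n, α n * g n := by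
  set α : ℕ → ℝ := fun n => L (basisVec n)
  have hα : ∀ n, 0 ≤ α n := fun n => hL.nonneg fun m => by
    rw [basisVec_apply, Pi.single_apply]
    split_ifs <;> norm_num
  have hpartial : ∀ N, ∑ n ∈ Finset.range N, α n ≤ 1 := fun N => by
    have : ∑ n ∈ Finset.range N, α n = L (∑ n ∈ Finset.range N, (1 : ℕ → ℝ) n • basisVec n) := by
      simp only [Pi.one_apply, one_smul, map_sum, α]
    rw [this]
    refine hL _ _ fun m => ?_
    rw [sum_smul_basisVec_apply]
    split_ifs <;> norm_num
  have hsum : Summable α := summable_of_sum_range_le hα hpartial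
  refine ⟨1 - ∑' n, α n, α, by linarith [Real.tsum_le_of_sum_range_le hα hpartial], hα, hsum,
    by ring, fun {g l} hg => ?_⟩
  have hsumg : Summable fun n => α n * g n := by
    refine Summable.of_norm_bounded (hsum.mul_right ‖ofTendsto hg‖) fun n => ?_
    rw [norm_mul, Real.norm_of_nonneg (hα n)]
    exact mul_le_mul_of_nonneg_left ((ofTendsto hg).norm_coe_le_norm n) (hα n)
  have hsum' : HasSum (fun n => α n * (g n - l)) (∑' n, α n * g n - (∑' n, α n) * l) := by
    simpa only [mul_sub] using hsumg.hasSum.sub (hsum.hasSum.mul_right l)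
  have hlim : Tendsto (fun N => l + ∑ n ∈ Finset.range N, α n * (g n - l)) atTop
      (𝓝 (L (ofTendsto hg))) := by
    refine Metric.tendsto_atTop.2 fun ε hε => ?_
    obtain ⟨N₀, hN₀⟩ := Metric.tendsto_atTop.1 hg (ε / 2) (half_pos hε)
    refine ⟨N₀, fun N hN => ?_⟩
    have := hL.abs_sub_partialSum_le (G := ofTendsto hg) (N := N)
      (fun m hm => (Real.dist_eq _ _ ▸ hN₀ m (hN.trans hm)).le) (half_pos hε).le
    rw [Real.dist_eq, abs_sub_comm]
    exact this.trans_lt (half_lt_self hε)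
  rw [tendsto_nhds_unique hlim (tendsto_const_nhds.add hsum'.tendsto_sum_nat)]
  ring

end IsMean

end MeansOnSequences

theorem exists_convex_weights_nonneg_of_sublinear {E : Type*} [AddCommGroup E] [Module ℝ E]
    {ψ : ℕ → ℝ} {ψinf : ℝ} {φ : ℕ → E → ℝ} {φinf : E → ℝ}
    (hφ_add : ∀ n u v, φ n (u + v) ≤ φ n u + φ n v)
    (hφ_smul : ∀ n u, ∀ c : ℝ, 0 ≤ c → φ n (c • u) = c * φ n u)
    (hψ : Tendsto ψ atTop (𝓝 ψinf)) (hφ : ∀ u, Tendsto (φ · u) atTop (𝓝 (φinf u)))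
    (hnotneg : ∀ μ : ℝ, 0 ≤ μ → ∀ u, ∀ c < (0 : ℝ), ∃ n, c < μ * ψ n + φ n u) :
    ∃ (αinf : ℝ) (α : ℕ → ℝ), 0 ≤ αinf ∧ (∀ n, 0 ≤ α n) ∧ Summable α ∧
      αinf + ∑' n, α n = 1 ∧
      0 ≤ αinf * ψinf + ∑' n, α n * ψ n ∧
      ∀ u, 0 ≤ αinf * φinf u + ∑' n, α n * φ n u := by
  have hφ_zero : ∀ n, φ n 0 = 0 := fun n => by simpa using hφ_smul n 0 0 le_rfl
  let W : ConvexCone ℝ (ℕ →ᵇ ℝ) :=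
    { carrier := {w | ∃ μ ≥ (0 : ℝ), ∃ u, ∀ n, μ * ψ n + φ n u ≤ w n}
      smul_mem' := by
        rintro c hc w ⟨μ, hμ, u, hw⟩
        refine ⟨c * μ, by positivity, c • u, fun n => ?_⟩
        have := mul_le_mul_of_nonneg_left (hw n) hc.le
        rw [hφ_smul n u c hc.le, BoundedContinuousFunction.smul_apply, smul_eq_mul]
        linarith
      add_mem' := by
        rintro w ⟨μ, hμ, u, hw⟩ w' ⟨μ', hμ', u', hw'⟩
        refine ⟨μ + μ', by positivity, u + u', fun n => ?_⟩
        rw [BoundedContinuousFunction.coe_add, Pi.add_apply]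
        linarith [hw n, hw' n, hφ_add n u u'] }
  have hψW : ofTendsto hψ ∈ W := ⟨1, zero_le_one, 0, fun n => by simp [hφ_zero]⟩
  have hφW : ∀ u, ofTendsto (hφ u) ∈ W := fun u => ⟨0, le_rfl, u, fun n => by simp⟩
  obtain ⟨L, hL, hLW⟩ := exists_isMean_nonneg_on_convexCone W
    ⟨0, le_rfl, 0, fun n => by simp [hφ_zero]⟩ fun w ⟨μ, hμ, u, hw⟩ c hc => by
      obtain ⟨n, hn⟩ := hnotneg μ hμ u c hc
      exact ⟨n, hn.trans_le (hw n)⟩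
  obtain ⟨αinf, α, hαinf, hα, hsum, hone, hrepr⟩ := hL.exists_weights
  exact ⟨αinf, α, hαinf, hα, hsum, hone, hrepr hψ ▸ hLW _ hψW,
    fun u => hrepr (hφ u) ▸ hLW _ (hφW u)⟩

theorem stmt_13 {E : Type*} [NormedAddCommGroup E] [NormedSpace ℝ E]
    (Ω : Set E) (hΩ : IsOpen Ω) (xh : E) (hxh : xh ∈ Ω) (r : ℝ) (hr : 0 < r)
    (h : ℕ → E → ℝ) (hinf : E → ℝ)
    -- property (H): each `h n` is Lipschitz on `B(xh,r) ∩ Ω`, ...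
    (hlip : ∀ n, ∃ K : ℝ, ∀ y ∈ Metric.ball xh r ∩ Ω, ∀ z ∈ Metric.ball xh r ∩ Ω,
      |h n y - h n z| ≤ K * ‖y - z‖)
    -- ... each `D⁺ h n (xh)` is sublinear, ...
    (hsub : ∀ n, (∀ u v : E, dini (h n) xh (u + v) ≤ dini (h n) xh u + dini (h n) xh v) ∧
      (∀ u : E, ∀ c : ℝ, 0 ≤ c → dini (h n) xh (c • u) = c * dini (h n) xh u))
    -- ... `hinf` is Lipschitz on `B(xh,r) ∩ Ω`, `hinf xh = lim h n xh`, and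
    -- the Lipschitz seminorms of `h n - hinf` tend to `0`.
    (hlipinf : ∃ K : ℝ, ∀ y ∈ Metric.ball xh r ∩ Ω, ∀ z ∈ Metric.ball xh r ∩ Ω,
      |hinf y - hinf z| ≤ K * ‖y - z‖)
    (hval : Tendsto (fun n => h n xh) atTop (𝓝 (hinf xh)))
    (hsem : ∀ ε > 0, ∃ N : ℕ, ∀ n ≥ N,
      ∀ y ∈ Metric.ball xh r ∩ Ω, ∀ z ∈ Metric.ball xh r ∩ Ω,
        |(h n y - hinf y) - (h n z - hinf z)| ≤ ε * ‖y - z‖) :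
    (∃ x ∈ Ω, ∃ t ∈ Set.Icc (0 : ℝ) 1, ∃ c < (0 : ℝ),
      ∀ n : ℕ, h n x - (1 - t) * h n xh ≤ c) ∨
    (∃ (αinf : ℝ) (α : ℕ → ℝ), 0 ≤ αinf ∧ (∀ n, 0 ≤ α n) ∧ Summable α ∧
      αinf + ∑' n, α n = 1 ∧
      0 ≤ αinf * hinf xh + ∑' n, α n * h n xh ∧
      ∀ u : E, 0 ≤ αinf * dini hinf xh u + ∑' n, α n * dini (h n) xh u) := by
  refine or_iff_not_imp_left.2 fun hnot => ?_
  have hs : Metric.ball xh r ∩ Ω ∈ 𝓝 xh :=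
    Filter.inter_mem (Metric.ball_mem_nhds xh hr) (hΩ.mem_nhds hxh)
  choose K hK using hlip
  obtain ⟨Kinf, hKinf⟩ := hlipinf
  have hf := fun n => lipschitzOnWith_of_abs_sub_le (hK n)
  have hg := lipschitzOnWith_of_abs_sub_le hKinf
  have hsem' : TendstoLipschitzSeminorm h hinf (Metric.ball xh r ∩ Ω) := fun ε hε => by
    obtain ⟨N, hN⟩ := hsem ε hε
    exact ⟨N, fun n hn => by simpa using lipschitzOnWith_of_abs_sub_le (f := h n - hinf) (hN n hn)⟩
  refine exists_convex_weights_nonneg_of_sublinear (fun n => (hsub n).1) (fun n => (hsub n).2)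
    hval (tendsto_dini hs hf hg hsem') fun μ hμ u c hc => ?_
  by_contra! hle
  exact hnot <|
    exists_forall_le_neg_of_forall_dini_le (hΩ.mem_nhds hxh) hs hf hg hval hsem' hμ hc hle
end

section
/- Let $X$ be a real vector space, $C \subset X$ nonempty convex, $g_n : C \to \mathbb{R}$ a sequence of convex functions converging pointwise to $g_\infty$, and suppose $\hat{x} \in C$ minimizes $g_0$ over the feasible set $\{x \in C : g_n(x) \leq 0 \text{ for all } n \geq 1\}$ (and $\hat{x}$ is feasible). Then there exist nonnegative reals $(\alpha_\infty, \alpha_0, \alpha_1, \ldots)$ with $\alpha_\infty + \sum_{n \geq 0} \alpha_n = 1$, $\alpha_\infty g_\infty(\hat{x}) = 0$, $\alpha_n g_n(\hat{x}) = 0$ for all $n \geq 1$, and the function $x \mapsto \alpha_\infty g_\infty(x) + \sum_{n \geq 0} \alpha_n g_n(x)$ attains a global minimum on $C$ at $\hat{x}$. -/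
/-!
Embed the constraints in `ℓ^∞ = ℕ →ᵇ ℝ`: for `x ∈ C` the sequence
`(g₀ x - g₀ x̂, g₁ x, g₂ x, …)` converges, hence is bounded, and the set `A` of bounded sequences
dominating one of these is convex. By optimality of `x̂`, `A` misses the interior of the
nonpositive cone, so Hahn–Banach yields a positive functional `φ` with `φ 1 = 1` and `φ ≥ 0` on `A`.
On convergent sequences such a functional is `φ s = α∞ · lim s + ∑ αₙ sₙ`, where `αₙ = φ eₙ` are its
values on the unit sequences and `α∞ = 1 - ∑ αₙ` is the mass it puts at infinity. Nonnegativity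
of `φ` on `A` is then the Lagrangian inequality, and evaluating it at `x̂`, where every term other
than `α₀ g₀ x̂` is nonpositive, forces complementary slackness.
-/

open Filter Topology Set BoundedContinuousFunction

namespace BoundedContinuousFunction

section Cone

variable {α : Type*} [TopologicalSpace α]

instance : PosSMulMono ℝ (α →ᵇ ℝ) :=
  ⟨fun _ hc _ _ hvw a => mul_le_mul_of_nonneg_left (hvw a) hc⟩

theorem neg_one_mem_interior_Iic_zero : (-1 : α →ᵇ ℝ) ∈ interior (Iic 0) := by
  refine mem_interior_iff_mem_nhds.2 (Metric.mem_nhds_iff.2 ⟨1, one_pos, fun w hw a => ?_⟩)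
  have h := (dist_coe_le_dist (f := w) (g := -1) a).trans_lt hw
  rw [Real.dist_eq, abs_lt] at h
  simp only [coe_neg, coe_one, Pi.neg_apply, Pi.one_apply] at h
  show w a ≤ 0
  linarith [h.2]

theorem lt_zero_of_mem_interior_Iic_zero {v : α →ᵇ ℝ} (hv : v ∈ interior (Iic 0)) (a : α) :
    v a < 0 := by
  obtain ⟨δ, hδ, hball⟩ := Metric.mem_nhds_iff.1 (mem_interior_iff_mem_nhds.1 hv)
  have hmem : v + const α (δ / 2) ∈ Metric.ball v δ := by
    rw [Metric.mem_ball, dist_eq_norm, add_sub_cancel_left]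
    refine (norm_const_le _).trans_lt ?_
    rw [Real.norm_of_nonneg (by positivity)]
    linarith
  have h : v a + δ / 2 ≤ 0 := hball hmem a
  linarith

theorem exists_positive_functional_nonneg_on {A : Set (α →ᵇ ℝ)} (hA : Convex ℝ A) (h0 : 0 ∈ A)
    (hA_neg : ∀ v ∈ A, ∃ a, 0 ≤ v a) :
    ∃ φ : (α →ᵇ ℝ) →L[ℝ] ℝ, (∀ v, 0 ≤ v → 0 ≤ φ v) ∧ φ 1 = 1 ∧ ∀ v ∈ A, 0 ≤ φ v := by
  have hdisj : Disjoint (interior (Iic 0)) A := disjoint_left.2 fun v hvU hvA =>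
    let ⟨a, ha⟩ := hA_neg v hvA
    (lt_zero_of_mem_interior_Iic_zero hvU a).not_ge ha
  obtain ⟨φ, u, hφU, hφA⟩ :=
    geometric_hahn_banach_open (convex_Iic 0).interior isOpen_interior hA hdisj
  have hφIic : ∀ v ≤ 0, φ v ≤ u := by
    intro v hv
    have hcl : v ∈ closure (interior (Iic 0)) := by
      rw [(convex_Iic (𝕜 := ℝ) 0).closure_interior_eq_closure_of_nonempty_interior
        ⟨_, neg_one_mem_interior_Iic_zero⟩]
      exact subset_closure hv
    exact closure_lt_subset_le φ.continuous continuous_const (closure_mono hφU hcl)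
  have hu : u = 0 := le_antisymm (by simpa using hφA 0 h0) (by simpa using hφIic 0 le_rfl)
  have hφ1 : 0 < φ 1 := by
    have := hφU _ neg_one_mem_interior_Iic_zero
    rw [map_neg, hu] at this
    linarith
  refine ⟨(φ 1)⁻¹ • φ, fun v hv => ?_, inv_mul_cancel₀ hφ1.ne', fun v hv => ?_⟩
  · have := hφIic (-v) (neg_nonpos.2 hv)
    rw [map_neg, hu] at this
    exact mul_nonneg (inv_nonneg.2 hφ1.le) (neg_nonpos.1 this)
  · exact mul_nonneg (inv_nonneg.2 hφ1.le) (hu ▸ hφA v hv)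

end Cone

theorem convex_setOf_exists_forall_le {ι X : Type*} [TopologicalSpace ι] [AddCommGroup X]
    [Module ℝ X] {C : Set X} (hC : Convex ℝ C) {f : ι → X → ℝ} (hf : ∀ i, ConvexOn ℝ C (f i)) :
    Convex ℝ {v : ι →ᵇ ℝ | ∃ x ∈ C, ∀ i, f i x ≤ v i} := by
  rintro v ⟨x, hx, hxv⟩ w ⟨y, hy, hyw⟩ a b ha hb hab
  refine ⟨a • x + b • y, hC hx hy ha hb hab, fun i => ?_⟩
  calc f i (a • x + b • y) ≤ a * f i x + b * f i y := (hf i).2 hx hy ha hb hab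
    _ ≤ a * v i + b * w i := by gcongr <;> simp_all
    _ = (a • v + b • w) i := by simp

theorem exists_coe_eq_of_tendsto {s : ℕ → ℝ} {L : ℝ} (hs : Tendsto s atTop (𝓝 L)) :
    ∃ v : ℕ →ᵇ ℝ, ⇑v = s := by
  obtain ⟨B, hB⟩ := hs.norm.bddAbove_range
  exact ⟨ofNormedAddCommGroupDiscrete s B fun n => hB ⟨n, rfl⟩, rfl⟩

noncomputable def unitSeq (n : ℕ) : ℕ →ᵇ ℝ := indicator {n} (isClopen_discrete _)

@[simp]
theorem unitSeq_apply (n m : ℕ) : unitSeq n m = if m = n then 1 else 0 := by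
  simp [unitSeq, Set.indicator_apply]

theorem sum_smul_unitSeq_apply (s : ℕ → ℝ) (F : Finset ℕ) (m : ℕ) :
    (∑ n ∈ F, s n • unitSeq n) m = (F : Set ℕ).indicator s m := by
  simp [coe_sum, Finset.sum_apply, Set.indicator_apply]

theorem hasSum_smul_unitSeq {s : ℕ →ᵇ ℝ} (hs : Tendsto s atTop (𝓝 0)) :
    HasSum (fun n => s n • unitSeq n) s := by
  show Tendsto _ atTop _
  rw [Metric.tendsto_nhds]
  intro ε hε
  obtain ⟨N, hN⟩ := eventually_atTop.1 ((Metric.tendsto_nhds.1 hs) (ε / 2) (by positivity))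
  filter_upwards [eventually_ge_atTop (Finset.range N)] with F hF
  refine ((dist_le (C := ε / 2) (by positivity)).2 fun m => ?_).trans_lt (by linarith)
  rw [sum_smul_unitSeq_apply]
  by_cases hm : m ∈ F
  · simpa [hm] using (half_pos hε).le
  · have hNm : N ≤ m := by
      by_contra h
      exact hm (hF (Finset.mem_range.2 (not_le.1 h)))
    simpa [hm, Real.dist_eq, abs_sub_comm] using (hN m hNm).le

section PositiveFunctional

variable {φ : (ℕ →ᵇ ℝ) →L[ℝ] ℝ} (hφ : ∀ v, 0 ≤ v → 0 ≤ φ v)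
include hφ

theorem apply_unitSeq_nonneg (n : ℕ) : 0 ≤ φ (unitSeq n) :=
  hφ _ fun m => by by_cases h : m = n <;> simp [h]

theorem sum_apply_unitSeq_le (F : Finset ℕ) : ∑ n ∈ F, φ (unitSeq n) ≤ φ 1 := by
  have h : 0 ≤ 1 - ∑ n ∈ F, (1 : ℝ) • unitSeq n := fun m => by
    change (0 : ℝ) ≤ (1 - ∑ n ∈ F, (1 : ℝ) • unitSeq n) m
    rw [coe_sub, Pi.sub_apply, sum_smul_unitSeq_apply]
    by_cases hm : m ∈ F <;> simp [hm]
  simpa [map_sum] using hφ _ h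

theorem summable_apply_unitSeq : Summable fun n => φ (unitSeq n) :=
  summable_of_sum_range_le (apply_unitSeq_nonneg hφ) fun _ => sum_apply_unitSeq_le hφ _

theorem tsum_apply_unitSeq_le : ∑' n, φ (unitSeq n) ≤ φ 1 :=
  Real.tsum_le_of_sum_range_le (apply_unitSeq_nonneg hφ) fun _ => sum_apply_unitSeq_le hφ _

theorem hasSum_apply_unitSeq_mul {s : ℕ →ᵇ ℝ} {L : ℝ} (hs : Tendsto s atTop (𝓝 L)) :
    HasSum (fun n => φ (unitSeq n) * s n) (φ s - (φ 1 - ∑' n, φ (unitSeq n)) * L) := by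
  have hs₀ : Tendsto ⇑(s - L • 1) atTop (𝓝 0) := by
    simpa using (hs.sub_const L).congr fun n => (by simp : s n - L = (s - L • 1) n)
  have h := ((hasSum_smul_unitSeq hs₀).mapL φ).add
    ((summable_apply_unitSeq hφ).hasSum.mul_left L)
  convert h using 1
  · ext n
    simp only [map_smul, smul_eq_mul, coe_sub, coe_smul, coe_one, Pi.sub_apply,
      Pi.one_apply, mul_one]
    ring
  · rw [map_sub, map_smul, smul_eq_mul]
    ring

end PositiveFunctional

end BoundedContinuousFunction

theorem eq_zero_of_le_add_tsum {p : ℝ} {t : ℕ → ℝ} (hp : p ≤ 0) (ht : ∀ n ≥ 1, t n ≤ 0)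
    (hsum : Summable t) (h : t 0 ≤ p + ∑' n, t n) : p = 0 ∧ ∀ n ≥ 1, t n = 0 := by
  rw [hsum.tsum_eq_zero_add] at h
  have htail : ∑' n, t (n + 1) ≤ 0 := tsum_nonpos fun n => ht _ (by omega)
  have htail0 : HasSum (fun n => -t (n + 1)) 0 := by
    have := ((summable_nat_add_iff 1).2 hsum).hasSum.neg
    rwa [show ∑' n, t (n + 1) = 0 by linarith, neg_zero] at this
  refine ⟨by linarith, fun n hn => ?_⟩
  obtain ⟨k, rfl⟩ := Nat.exists_eq_add_of_le' hn
  have := congrFun ((hasSum_zero_iff_of_nonneg fun n => neg_nonneg.2 (ht _ (by omega))).1 htail0) k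
  simpa using this

theorem exists_multipliers_le_lagrangian {X : Type*} [AddCommGroup X] [Module ℝ X] {C : Set X}
    (hC : Convex ℝ C) {g : ℕ → X → ℝ} {ginf : X → ℝ} (hconv : ∀ n, ConvexOn ℝ C (g n))
    (hlim : ∀ x ∈ C, Tendsto (fun n => g n x) atTop (𝓝 (ginf x))) {xh : X} (hxhC : xh ∈ C)
    (hfeas : ∀ n ≥ 1, g n xh ≤ 0) (hmin : ∀ x ∈ C, (∀ n ≥ 1, g n x ≤ 0) → g 0 xh ≤ g 0 x) :
    ∃ (αinf : ℝ) (α : ℕ → ℝ), 0 ≤ αinf ∧ (∀ n, 0 ≤ α n) ∧ Summable α ∧ αinf + ∑' n, α n = 1 ∧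
      ∀ x ∈ C, Summable (fun n => α n * g n x) ∧
        α 0 * g 0 xh ≤ αinf * ginf x + ∑' n, α n * g n x := by
  obtain ⟨φ, hφ, hφ1, hφA⟩ := exists_positive_functional_nonneg_on
    (convex_setOf_exists_forall_le hC (f := fun n x => g n x - g 0 xh * unitSeq 0 n)
      fun n => (hconv n).sub (concaveOn_const _ hC))
    ⟨xh, hxhC, fun n => by rcases n with _ | n <;> simp [hfeas]⟩
    (by
      rintro v ⟨x, hx, hxv⟩
      by_contra! hneg
      have hfeas_x : ∀ n ≥ 1, g n x ≤ 0 := fun n hn => by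
        simpa [Nat.one_le_iff_ne_zero.1 hn] using ((hxv n).trans (hneg n).le)
      have h0 : g 0 x - g 0 xh < 0 := by simpa using (hxv 0).trans_lt (hneg 0)
      linarith [hmin x hx hfeas_x])
  refine ⟨1 - ∑' n, φ (unitSeq n), fun n => φ (unitSeq n),
    sub_nonneg.2 (hφ1 ▸ tsum_apply_unitSeq_le hφ), apply_unitSeq_nonneg hφ,
    summable_apply_unitSeq hφ, sub_add_cancel _ _, fun x hx => ?_⟩
  obtain ⟨v, hv⟩ := exists_coe_eq_of_tendsto (hlim x hx)
  have hsum := hasSum_apply_unitSeq_mul hφ (hv ▸ hlim x hx)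
  have hA := hφA (v - g 0 xh • unitSeq 0) ⟨x, hx, fun n => by simp [hv]⟩
  rw [hφ1, hv] at hsum
  rw [map_sub, map_smul, smul_eq_mul] at hA
  exact ⟨hsum.summable, by rw [hsum.tsum_eq]; linarith⟩

theorem stmt_15_general {X : Type*} [AddCommGroup X] [Module ℝ X]
    (C : Set X) (hCconv : Convex ℝ C)
    (g : ℕ → X → ℝ) (ginf : X → ℝ)
    (hconv : ∀ n, ConvexOn ℝ C (g n))
    (hlim : ∀ x ∈ C, Tendsto (fun n => g n x) atTop (𝓝 (ginf x)))
    (xh : X) (hxhC : xh ∈ C) (hfeas : ∀ n ≥ 1, g n xh ≤ 0)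
    (hmin : ∀ x ∈ C, (∀ n ≥ 1, g n x ≤ 0) → g 0 xh ≤ g 0 x) :
    ∃ (αinf : ℝ) (α : ℕ → ℝ), 0 ≤ αinf ∧ (∀ n, 0 ≤ α n) ∧ Summable α ∧
      αinf + ∑' n, α n = 1 ∧
      αinf * ginf xh = 0 ∧ (∀ n ≥ 1, α n * g n xh = 0) ∧
      ∀ x ∈ C, αinf * ginf xh + ∑' n, α n * g n xh ≤
        αinf * ginf x + ∑' n, α n * g n x := by
  obtain ⟨αinf, α, hαinf, hα, hαsum, hαone, hlagr⟩ :=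
    exists_multipliers_le_lagrangian hCconv hconv hlim hxhC hfeas hmin
  obtain ⟨hsum_xh, hlagr_xh⟩ := hlagr xh hxhC
  have hginf : ginf xh ≤ 0 := le_of_tendsto (hlim xh hxhC) (eventually_atTop.2 ⟨1, hfeas⟩)
  obtain ⟨hslack_inf, hslack⟩ := eq_zero_of_le_add_tsum
    (mul_nonpos_of_nonneg_of_nonpos hαinf hginf)
    (fun n hn => mul_nonpos_of_nonneg_of_nonpos (hα n) (hfeas n hn)) hsum_xh hlagr_xh
  have hlagr_eq : αinf * ginf xh + ∑' n, α n * g n xh = α 0 * g 0 xh := by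
    rw [hslack_inf, zero_add, tsum_eq_single 0 fun n hn => hslack n (Nat.one_le_iff_ne_zero.2 hn)]
  exact ⟨αinf, α, hαinf, hα, hαsum, hαone, hslack_inf, hslack,
    fun x hx => hlagr_eq ▸ (hlagr x hx).2⟩

theorem stmt_15 {X : Type*} [AddCommGroup X] [Module ℝ X]
    (C : Set X) (hC : C.Nonempty) (hCconv : Convex ℝ C)
    (g : ℕ → X → ℝ) (ginf : X → ℝ)
    (hconv : ∀ n, ConvexOn ℝ C (g n))
    (hlim : ∀ x ∈ C, Tendsto (fun n => g n x) atTop (𝓝 (ginf x)))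
    (xh : X) (hxhC : xh ∈ C) (hfeas : ∀ n ≥ 1, g n xh ≤ 0)
    (hmin : ∀ x ∈ C, (∀ n ≥ 1, g n x ≤ 0) → g 0 xh ≤ g 0 x) :
    ∃ (αinf : ℝ) (α : ℕ → ℝ), 0 ≤ αinf ∧ (∀ n, 0 ≤ α n) ∧ Summable α ∧
      αinf + ∑' n, α n = 1 ∧
      αinf * ginf xh = 0 ∧ (∀ n ≥ 1, α n * g n xh = 0) ∧
      ∀ x ∈ C, αinf * ginf xh + ∑' n, α n * g n xh ≤
        αinf * ginf x + ∑' n, α n * g n x :=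
  stmt_15_general C hCconv g ginf hconv hlim xh hxhC hfeas hmin
end

section
/- Consider the problem of minimizing $f_0(x) = \limsup_n |x_n| - 2\sum_{n \geq 1} 2^{-3n} x_n + x_0$ over the open unit ball of $\ell^\infty(\mathbb{N})$ subject to the countably many constraints $f_n(x) = 2^{-n} x_n^2 + \limsup_k |x_k| - x_0 - 2^{-3n} \leq 0$ for all $n \geq 1$. Then the point $\hat{x}$ given by $\hat{x}_0 = 0$ and $\hat{x}_n = 2^{-n}$ for $n \geq 1$ is feasible and is the unique solution: every feasible $x$ satisfies $f_0(x) \geq f_0(\hat{x})$, with equality only for $x = \hat{x}$. -/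
open Filter Topology

/-- `p(x) = limsup_n |x_n|`. -/
noncomputable def pLimsup (x : ℕ → ℝ) : ℝ := Filter.limsup (fun n => |x n|) atTop

/-- The objective function `f₀`. -/
noncomputable def fObj (x : ℕ → ℝ) : ℝ :=
  pLimsup x - 2 * (∑' n : ℕ, (2 : ℝ) ^ (-(3 : ℤ) * ((n : ℤ) + 1)) * x (n + 1)) + x 0

/-- The constraint functions `f_n`, `n ≥ 1`. -/
noncomputable def fCon (n : ℕ) (x : ℕ → ℝ) : ℝ :=
  (2 : ℝ) ^ (-(n : ℤ)) * (x n) ^ 2 + pLimsup x - x 0 - (2 : ℝ) ^ (-(3 : ℤ) * (n : ℤ))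

/-- Feasibility: `x` is in the open unit ball of `ℓ^∞` and satisfies all constraints. -/
def feasible (x : ℕ → ℝ) : Prop :=
  (∃ c < (1 : ℝ), ∀ n, |x n| ≤ c) ∧ ∀ n ≥ 1, fCon n x ≤ 0

/-- The candidate solution `x̂`. -/
noncomputable def xhat : ℕ → ℝ := fun n => if n = 0 then 0 else (2 : ℝ) ^ (-(n : ℤ))

/-!
With the multipliers `λₙ = 2⁻ⁿ` and `p = limsup |xₙ|`, the constraint `fₙ` is built so that
`f₀(x) + ∑ₙ 2⁻ⁿ fₙ(x) = f₀(x̂) + 2p + ∑ₙ 4⁻ⁿ (xₙ - 2⁻ⁿ)²`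
holds for every bounded `x`. On the feasible set the sum `∑ₙ 2⁻ⁿ fₙ(x)` is nonpositive and the
right-hand side exceeds `f₀(x̂)` by two nonnegative quantities; at equality `p = 0` and `xₙ = 2⁻ⁿ` for `n ≥ 1`,
after which `f₀(x) = f₀(x̂) + x₀` forces `x₀ = 0`.
-/

lemma two_zpow_neg_natCast (k : ℕ) : (2 : ℝ) ^ (-(k : ℤ)) = 2⁻¹ ^ k := by
  rw [zpow_neg, ← inv_zpow, zpow_natCast]

lemma two_zpow_neg_three_mul_succ (n : ℕ) :
    (2 : ℝ) ^ (-(3 : ℤ) * ((n : ℤ) + 1)) = (2⁻¹ ^ (n + 1)) ^ 3 := by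
  rw [show -(3 : ℤ) * ((n : ℤ) + 1) = -((n + 1 : ℕ) : ℤ) * 3 by push_cast; ring, zpow_mul,
    two_zpow_neg_natCast, zpow_ofNat]

lemma hasSum_inv_two_pow_succ_pow {k : ℕ} (hk : k ≠ 0) :
    HasSum (fun n : ℕ => ((2⁻¹ : ℝ) ^ (n + 1)) ^ k) (1 / (2 ^ k - 1)) := by
  have h2k : (1 : ℝ) < 2 ^ k := one_lt_pow₀ one_lt_two hk
  have hr : ((2 : ℝ) ^ k)⁻¹ < 1 := inv_lt_one_of_one_lt₀ h2k
  have hsum : ((2 : ℝ) ^ k)⁻¹ * (1 - ((2 : ℝ) ^ k)⁻¹)⁻¹ = 1 / (2 ^ k - 1) := by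
    field_simp
  rw [← hsum]
  refine ((hasSum_geometric_of_lt_one (by positivity) hr).mul_left _).congr_fun fun n => ?_
  rw [← pow_mul, mul_comm, pow_mul, inv_pow, pow_succ']

lemma xhat_zero : xhat 0 = 0 := rfl

lemma xhat_succ (n : ℕ) : xhat (n + 1) = 2⁻¹ ^ (n + 1) := by
  rw [xhat, if_neg n.succ_ne_zero, two_zpow_neg_natCast]

lemma fCon_succ (n : ℕ) (x : ℕ → ℝ) :
    fCon (n + 1) x = 2⁻¹ ^ (n + 1) * x (n + 1) ^ 2 + pLimsup x - x 0 - (2⁻¹ ^ (n + 1)) ^ 3 := by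
  rw [fCon, two_zpow_neg_natCast, ← two_zpow_neg_three_mul_succ]
  push_cast
  rfl

lemma fObj_eq (x : ℕ → ℝ) :
    fObj x = pLimsup x - 2 * ∑' n : ℕ, ((2⁻¹ : ℝ) ^ (n + 1)) ^ 3 * x (n + 1) + x 0 := by
  simp only [fObj, two_zpow_neg_three_mul_succ]

lemma pLimsup_xhat : pLimsup xhat = 0 := by
  refine Tendsto.limsup_eq ((tendsto_add_atTop_iff_nat 1).1 ?_)
  simp only [xhat_succ, abs_pow, abs_inv, abs_two]
  exact (tendsto_pow_atTop_nhds_zero_of_lt_one (by norm_num) (by norm_num)).comp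
    (tendsto_add_atTop_nat 1)

lemma fObj_xhat : fObj xhat = -(2 / 15) := by
  have hsum := (hasSum_inv_two_pow_succ_pow four_ne_zero).tsum_eq
  simp only [fObj_eq, pLimsup_xhat, xhat_zero, xhat_succ, ← pow_succ] at hsum ⊢
  rw [hsum]
  norm_num

lemma feasible_xhat : feasible xhat := by
  refine ⟨⟨2⁻¹, by norm_num, fun n => ?_⟩, fun n hn => ?_⟩
  · cases n with
    | zero => simp [xhat_zero]
    | succ m =>
      rw [xhat_succ, abs_of_nonneg (by positivity)]
      exact pow_le_of_le_one (by norm_num) (by norm_num) m.succ_ne_zero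
  · obtain ⟨m, rfl⟩ := Nat.exists_eq_add_of_le' hn
    rw [fCon_succ, pLimsup_xhat, xhat_zero, xhat_succ]
    exact le_of_eq (by ring)

lemma feasible.abs_le_one {x : ℕ → ℝ} (hx : feasible x) (n : ℕ) : |x n| ≤ 1 :=
  let ⟨_, hc, hbd⟩ := hx.1
  (hbd n).trans hc.le

/-- The quadratic term `4⁻ⁿ (xₙ - x̂ₙ)²` of the Lagrangian identity, shifted to start at `n = 1`. -/
noncomputable def penalty (x : ℕ → ℝ) (n : ℕ) : ℝ :=
  ((2⁻¹ : ℝ) ^ (n + 1)) ^ 2 * (x (n + 1) - xhat (n + 1)) ^ 2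

section Bounded

variable {x : ℕ → ℝ}

lemma penalty_nonneg (x : ℕ → ℝ) (n : ℕ) : 0 ≤ penalty x n := by
  unfold penalty
  positivity

lemma pLimsup_nonneg (hx : ∀ n, |x n| ≤ 1) : 0 ≤ pLimsup x :=
  le_limsup_of_frequently_le (Frequently.of_forall fun _ => abs_nonneg _)
    ⟨1, eventually_map.2 (Eventually.of_forall hx)⟩

lemma summable_weighted_succ (hx : ∀ n, |x n| ≤ 1) :
    Summable fun n : ℕ => ((2⁻¹ : ℝ) ^ (n + 1)) ^ 3 * x (n + 1) :=
  (hasSum_inv_two_pow_succ_pow three_ne_zero).summable.of_norm_bounded fun n => by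
    rw [Real.norm_eq_abs, abs_mul, abs_of_nonneg (by positivity)]
    exact mul_le_of_le_one_right (by positivity) (hx _)

lemma summable_penalty (hx : ∀ n, |x n| ≤ 1) : Summable (penalty x) := by
  refine .of_nonneg_of_le (penalty_nonneg x) (fun n => ?_)
    ((hasSum_inv_two_pow_succ_pow two_ne_zero).summable.mul_left 4)
  have hdiff : |x (n + 1) - xhat (n + 1)| ≤ |2| := by
    rw [abs_two]
    linarith [abs_sub (x (n + 1)) (xhat (n + 1)), hx (n + 1), feasible_xhat.abs_le_one (n + 1)]
  calc penalty x n ≤ ((2⁻¹ : ℝ) ^ (n + 1)) ^ 2 * 2 ^ 2 :=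
        mul_le_mul_of_nonneg_left (sq_le_sq.2 hdiff) (by positivity)
    _ = 4 * ((2⁻¹ : ℝ) ^ (n + 1)) ^ 2 := by ring

lemma eq_xhat_succ_of_tsum_penalty_eq_zero (hx : ∀ n, |x n| ≤ 1)
    (h : ∑' n, penalty x n = 0) (n : ℕ) : x (n + 1) = xhat (n + 1) := by
  have hzero := (hasSum_zero_iff_of_nonneg (penalty_nonneg x)).1 (h ▸ (summable_penalty hx).hasSum)
  have hn := congr_fun hzero n
  simp only [penalty, Pi.zero_apply, mul_eq_zero, pow_eq_zero_iff two_ne_zero, sub_eq_zero] at hn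
  exact hn.resolve_left (by positivity)

end Bounded

lemma fObj_xhat_add_le {x : ℕ → ℝ} (hx : feasible x) :
    fObj xhat + 2 * pLimsup x + ∑' n, penalty x n ≤ fObj x := by
  rw [fObj_xhat, fObj_eq x]
  have hbd := hx.abs_le_one
  set p := pLimsup x
  set G := ∑' n, penalty x n
  set S := ∑' n : ℕ, ((2⁻¹ : ℝ) ^ (n + 1)) ^ 3 * x (n + 1)
  have hlagrangian : HasSum (fun n : ℕ => 2⁻¹ ^ (n + 1) * fCon (n + 1) x)
      (G + 2 * S + 1 / (2 ^ 1 - 1) * (p - x 0) - 2 * (1 / (2 ^ 4 - 1))) := by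
    refine ((((summable_penalty hbd).hasSum.add
      ((summable_weighted_succ hbd).hasSum.mul_left 2)).add
      ((hasSum_inv_two_pow_succ_pow one_ne_zero).mul_right (p - x 0))).sub
      ((hasSum_inv_two_pow_succ_pow four_ne_zero).mul_left 2)).congr_fun fun n => ?_
    rw [fCon_succ, penalty, xhat_succ]
    ring
  have hsum_nonpos := hlagrangian.nonpos fun n =>
    mul_nonpos_of_nonneg_of_nonpos (by positivity) (hx.2 (n + 1) n.succ_pos)
  norm_num at hsum_nonpos
  linarith

theorem stmt_19 :
    feasible xhat ∧
    ∀ x : ℕ → ℝ, feasible x → fObj xhat ≤ fObj x ∧ (fObj x = fObj xhat → x = xhat) := by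
  refine ⟨feasible_xhat, fun x hx => ?_⟩
  have hbd := hx.abs_le_one
  have hp := pLimsup_nonneg hbd
  have hG : 0 ≤ ∑' n, penalty x n := tsum_nonneg (penalty_nonneg x)
  have hle := fObj_xhat_add_le hx
  refine ⟨by linarith, fun heq => ?_⟩
  have hp0 : pLimsup x = 0 := by linarith
  have hsucc := eq_xhat_succ_of_tsum_penalty_eq_zero hbd (by linarith)
  have hx0 : x 0 = 0 := by
    rw [fObj_eq, fObj_eq, hp0, pLimsup_xhat, xhat_zero] at heq
    simp only [hsucc] at heq
    linarith
  funext n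
  cases n with
  | zero => exact hx0
  | succ m => exact hsucc m
end
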